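/- arXiv:2502.07708 — 2 statements merged into one kernel-verified Lean document; each statement's English description precedes it below -/
import Mathlib

section
/- With the setting of the previous statement (flow Φ on basin B, strict proper Lyapunov function V, level set L = V⁻¹(c)), the map F : ℝ × L → B \ {x*} defined by F(t, x) = Φ^t(x) is a homeomorphism; moreover, if Φ is C^k on ℝ × (B \ {x*}) and L is a C^k embedded submanifold transverse to the vector field, then F is a C^k diffeomorphism. -/
set_option maxHeartbeats 1000000

open Filter Topology Set Asymptotics
open scoped Manifold ContDiff


open Filter Topology Set Asymptotics
open scoped ContDiff

theorem wift_slice {E : Type*} [NormedAddCommGroup E] [NormedSpace ℝ E]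
    {s : Set E} {x : E} {t : ℝ} (hx : x ∈ s) {W : ℝ × E → ℝ} {A : ℝ × E →L[ℝ] ℝ}
    {U : Set (ℝ × E)} (hU : U ∈ 𝓝[univ ×ˢ s] (t, x))
    (hW : HasFDerivWithinAt W A U (t, x)) :
    HasDerivAt (fun t' : ℝ => W (t', x)) (A (1, 0)) t := by
  have hι : HasDerivAt (fun t' : ℝ => ((t', x) : ℝ × E)) ((1 : ℝ), (0 : E)) t :=
    (hasDerivAt_id t).prodMk (hasDerivAt_const t x)
  obtain ⟨O, hOopen, hOmem, hOsub⟩ := mem_nhdsWithin.1 hU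
  have hpre : (fun t' : ℝ => ((t', x) : ℝ × E)) ⁻¹' U ∈ 𝓝 t := by
    have h1 : (fun t' : ℝ => ((t', x) : ℝ × E)) ⁻¹' O ∈ 𝓝 t :=
      (hOopen.preimage (continuous_id.prodMk continuous_const)).mem_nhds hOmem
    filter_upwards [h1] with t' ht'
    exact hOsub ⟨ht', ⟨mem_univ _, hx⟩⟩
  have hcomp := hW.comp_hasDerivWithinAt t
    (hι.hasDerivWithinAt (s := (fun t' : ℝ => ((t', x) : ℝ × E)) ⁻¹' U))
    (fun t' ht' => ht')
  exact hcomp.hasDerivAt hpre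

theorem wift_nat {E : Type*} [NormedAddCommGroup E] [NormedSpace ℝ E] (m : ℕ) :
    ∀ (s : Set E) (x₀ : E) (σ : E → ℝ) (W : ℝ × E → ℝ) (c : ℝ) (d : ℝ),
      x₀ ∈ s → ContinuousOn σ s →
      ContDiffWithinAt ℝ m W (univ ×ˢ s) (σ x₀, x₀) →
      (∀ y ∈ s, W (σ y, y) = c) →
      d ≠ 0 → HasDerivAt (fun t : ℝ => W (t, x₀)) d (σ x₀) →
      ContDiffWithinAt ℝ m σ s x₀ := by
  induction m with
  | zero =>
    intro s x₀ σ W c d hx₀ hσc hW heq hd hder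
    rw [Nat.cast_zero, contDiffWithinAt_zero hx₀]
    exact ⟨univ, univ_mem, hσc.mono inter_subset_left⟩
  | succ m IH =>
    intro s x₀ σ W c d hx₀ hσc hW heq hd hder
    have hmtop : (m : WithTop ℕ∞) ≠ ∞ := by
      norm_cast
      exact ENat.coe_ne_top m
    have hcastsucc : ((m + 1 : ℕ) : WithTop ℕ∞) = (m : WithTop ℕ∞) + 1 := by
      push_cast; ring
    have hins : insert x₀ s = s := insert_eq_self.2 hx₀
    have hins2 : insert ((σ x₀, x₀) : ℝ × E) (univ ×ˢ s) = univ ×ˢ s :=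
      insert_eq_self.2 (mem_prod.2 ⟨mem_univ _, hx₀⟩)
    have hW' := hW
    rw [hcastsucc, contDiffWithinAt_succ_iff_hasFDerivWithinAt hmtop, hins2] at hW'
    obtain ⟨U, hUmem, -, f', hf'deriv, hf'smooth⟩ := hW'
    have hbase : ((σ x₀, x₀) : ℝ × E) ∈ U :=
      mem_of_mem_nhdsWithin (show ((σ x₀, x₀) : ℝ × E) ∈ univ ×ˢ s from
        mem_prod.2 ⟨mem_univ _, hx₀⟩) hUmem
    have hslice : HasDerivAt (fun t : ℝ => W (t, x₀)) (f' (σ x₀, x₀) (1, 0)) (σ x₀) :=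
      wift_slice hx₀ hUmem (hf'deriv _ hbase)
    have hd0 : f' (σ x₀, x₀) (1, 0) = d := hslice.unique hder
    have hf'cont : ContinuousWithinAt f' U (σ x₀, x₀) := hf'smooth.continuousWithinAt
    set φ : E → ℝ × E := fun y => (σ y, y) with hφdef
    have hφx₀ : φ x₀ = (σ x₀, x₀) := rfl
    have hφcont : ContinuousOn φ s := hσc.prodMk continuousOn_id
    have hφmaps : ∀ y ∈ s, φ y ∈ univ ×ˢ s := fun y hy => ⟨mem_univ _, hy⟩
    -- the good set
    have hopen : IsOpen {A : ℝ × E →L[ℝ] ℝ | |d| / 2 < |A (1, 0)|} := by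
      have hcont : Continuous fun A : ℝ × E →L[ℝ] ℝ => |A (1, 0)| :=
        ((ContinuousLinearMap.apply ℝ ℝ ((1 : ℝ), (0 : E))).continuous).abs
      exact isOpen_lt continuous_const hcont
    have haU : {p : ℝ × E | |d| / 2 < |f' p (1, 0)|} ∈ 𝓝[U] (σ x₀, x₀) := by
      apply hf'cont (hopen.mem_nhds _)
      simp only [mem_setOf_eq, hd0]
      have : 0 < |d| := abs_pos.2 hd
      linarith
    have hU'mem : U ∩ {p : ℝ × E | |d| / 2 < |f' p (1, 0)|} ∈ 𝓝[univ ×ˢ s] (σ x₀, x₀) := by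
      refine inter_mem hUmem ?_
      exact nhdsWithin_le_of_mem hUmem haU
    have hφtendsto : Tendsto φ (𝓝[s] x₀) (𝓝[univ ×ˢ s] (σ x₀, x₀)) := by
      rw [← hφx₀]
      exact tendsto_nhdsWithin_of_tendsto_nhds_of_eventually_within _
        (hφcont x₀ hx₀).tendsto
        (eventually_mem_nhdsWithin.mono fun y hy => hφmaps y hy)
    set u : Set E := s ∩ φ ⁻¹' (U ∩ {p : ℝ × E | |d| / 2 < |f' p (1, 0)|}) with hudef
    have humem : u ∈ 𝓝[s] x₀ := inter_mem self_mem_nhdsWithin (hφtendsto hU'mem)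
    have husub : u ⊆ s := inter_subset_left
    have huU : ∀ y ∈ u, φ y ∈ U := fun y hy => hy.2.1
    have hua : ∀ y ∈ u, |d| / 2 < |f' (φ y) (1, 0)| := fun y hy => hy.2.2
    -- the candidate derivative
    set σd : E → E →L[ℝ] ℝ := fun y =>
      (-(f' (φ y) (1, 0))⁻¹) • ((f' (φ y)).comp (ContinuousLinearMap.inr ℝ ℝ E)) with hσddef
    rw [hcastsucc, contDiffWithinAt_succ_iff_hasFDerivWithinAt hmtop, hins]
    refine ⟨u, humem, by simp, σd, ?_, ?_⟩
    · -- the hard derivative claim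
      intro y hy
      have hys : y ∈ s := husub hy
      have hyU : φ y ∈ U := huU y hy
      have ha : |d| / 2 < |f' (φ y) (1, 0)| := hua y hy
      set a : ℝ := f' (φ y) (1, 0) with hadef
      have ha0 : a ≠ 0 := by
        intro h
        rw [h, abs_zero] at ha
        have : 0 < |d| := abs_pos.2 hd
        linarith
      have hapos : 0 < |a| := abs_pos.2 ha0
      set b : E →L[ℝ] ℝ := (f' (φ y)).comp (ContinuousLinearMap.inr ℝ ℝ E) with hbdef
      have hdecomp : ∀ (t : ℝ) (v : E), f' (φ y) (t, v) = t * a + b v := by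
        intro t v
        have h1 : ((t, v) : ℝ × E) = t • ((1 : ℝ), (0 : E)) + ((0 : ℝ), v) := by
          rw [Prod.smul_mk, Prod.mk_add_mk]
          simp
        have hbv : b v = f' (φ y) (0, v) := rfl
        rw [h1, map_add, map_smul, smul_eq_mul, hbv, hadef]
      -- tendsto of φ within u to within U
      have hσyc : ContinuousWithinAt σ u y := (hσc y hys).mono husub
      have hφtendy : Tendsto φ (𝓝[u] y) (𝓝[U] (φ y)) := by
        refine tendsto_nhdsWithin_of_tendsto_nhds_of_eventually_within _ ?_ ?_
        · exact (hσyc.prodMk (continuousWithinAt_id)).tendsto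
        · exact eventually_mem_nhdsWithin.mono fun z hz => huU z hz
      -- little-o chain
      have h₁ : (fun q : ℝ × E => W q - W (φ y) - f' (φ y) (q - φ y)) =o[𝓝[U] (φ y)]
          fun q => q - φ y := (hf'deriv _ hyU).isLittleO
      have h₂ := h₁.comp_tendsto hφtendy
      have h₃ : (fun z : E => f' (φ y) (φ z - φ y)) =o[𝓝[u] y] fun z => φ z - φ y := by
        have hev : (fun z : E => W (φ z) - W (φ y) - f' (φ y) (φ z - φ y)) =ᶠ[𝓝[u] y]
            fun z => -(f' (φ y) (φ z - φ y)) := by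
          filter_upwards [self_mem_nhdsWithin] with z hz
          rw [heq z (husub hz), heq y hys]
          ring
        have := (h₂.congr' hev EventuallyEq.rfl)
        simpa [Function.comp_def] using this.neg_left
      -- the big-O bound
      have hφsub : ∀ z : E, φ z - φ y = (σ z - σ y, z - y) := fun z => rfl
      have hO : (fun z : E => φ z - φ y) =O[𝓝[u] y] fun z => z - y := by
        rw [isBigO_iff]
        refine ⟨(2 * ‖b‖ + 2 * |a|) / |a|, ?_⟩
        filter_upwards [h₃.def (half_pos hapos)] with z hz
        set α := |a| with hα
        set β := ‖b‖ with hβ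
        have hP1 : |σ z - σ y| ≤ ‖φ z - φ y‖ := by
          rw [← Real.norm_eq_abs]
          exact norm_fst_le (φ z - φ y)
        have hP3 : ‖φ z - φ y‖ ≤ |σ z - σ y| + ‖z - y‖ := by
          calc ‖φ z - φ y‖ = max |σ z - σ y| ‖z - y‖ := by
                rw [hφsub, Prod.norm_def, Real.norm_eq_abs]
            _ ≤ |σ z - σ y| + ‖z - y‖ :=
                max_le (le_add_of_nonneg_right (norm_nonneg _))
                  (le_add_of_nonneg_left (abs_nonneg _))
        have hval : f' (φ y) (φ z - φ y) = (σ z - σ y) * a + b (z - y) := by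
          rw [hφsub]; exact hdecomp _ _
        rw [hval, Real.norm_eq_abs] at hz
        have hb1 : |b (z - y)| ≤ ‖b‖ * ‖z - y‖ := by
          rw [← Real.norm_eq_abs]
          exact b.le_opNorm _
        have habs : |a| * |σ z - σ y| - ‖b‖ * ‖z - y‖ ≤ |(σ z - σ y) * a + b (z - y)| := by
          have t1 : |(σ z - σ y) * a| ≤ |(σ z - σ y) * a + b (z - y)| + |b (z - y)| := by
            have h := abs_add_le ((σ z - σ y) * a + b (z - y)) (-(b (z - y)))
            rw [add_neg_cancel_right, abs_neg] at h
            exact h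
          rw [abs_mul] at t1
          nlinarith [t1, hb1]
        have hS : |a| * |σ z - σ y| - ‖b‖ * ‖z - y‖ ≤ |a| / 2 * ‖φ z - φ y‖ :=
          le_trans habs hz
        have hαA : |a| * |σ z - σ y| ≤ (2 * ‖b‖ + |a|) * ‖z - y‖ := by
          nlinarith [hS, mul_le_mul_of_nonneg_left hP3 (by positivity : (0:ℝ) ≤ |a| / 2)]
        rw [div_mul_eq_mul_div, le_div_iff₀ hapos]
        nlinarith [mul_le_mul_of_nonneg_right hP3 hapos.le, hαA, norm_nonneg (z - y)]
      have h₄ := h₃.trans_isBigO hO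
      -- conclude
      have hfinal : (fun z : E => σ z - σ y - σd y (z - y)) =o[𝓝[u] y] fun z => z - y := by
        have h₅ := h₄.const_mul_left a⁻¹
        refine h₅.congr_left fun z => ?_
        have hval : f' (φ y) (φ z - φ y) = (σ z - σ y) * a + b (z - y) := by
          rw [hφsub]; exact hdecomp _ _
        rw [hval]
        have hσdy : σd y (z - y) = -(a⁻¹) * b (z - y) := by
          have hb2 : σd y (z - y) = -(a⁻¹) • (b (z - y)) := by
            rw [hσddef, ContinuousLinearMap.smul_apply]
          rw [hb2, smul_eq_mul]
        rw [hσdy]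
        field_simp
        ring
      exact HasFDerivWithinAt.of_isLittleO hfinal
    · -- smoothness of the derivative
      have hσsmooth : ContDiffWithinAt ℝ m σ s x₀ :=
        IH s x₀ σ W c d hx₀ hσc (hW.of_le (by exact_mod_cast Nat.le_succ m)) heq hd hder
      have hφsmooth : ContDiffWithinAt ℝ m φ s x₀ := hσsmooth.prodMk contDiffWithinAt_id
      have hcomp : ContDiffWithinAt ℝ m (fun y => f' (φ y)) u x₀ := by
        have hg : ContDiffWithinAt ℝ m f' U (φ x₀) := by rw [hφx₀]; exact hf'smooth
        have := ContDiffWithinAt.comp (g := f') (f := φ) (t := U) x₀ hg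
          (hφsmooth.mono husub) (fun z hz => huU z hz)
        exact this
      have ha : ContDiffWithinAt ℝ m (fun y => f' (φ y) (1, 0)) u x₀ :=
        hcomp.clm_apply contDiffWithinAt_const
      have hax₀ : x₀ ∈ u := mem_of_mem_nhdsWithin hx₀ humem
      have hainv : ContDiffWithinAt ℝ m (fun y => -(f' (φ y) (1, 0))⁻¹) u x₀ := by
        refine (ha.inv ?_).neg
        rw [hφx₀, hd0]
        exact hd
      have hb : ContDiffWithinAt ℝ m
          (fun y => (f' (φ y)).comp (ContinuousLinearMap.inr ℝ ℝ E)) u x₀ :=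
        hcomp.clm_comp contDiffWithinAt_const
      exact hainv.smul hb

theorem wift {E : Type*} [NormedAddCommGroup E] [NormedSpace ℝ E] (m : ℕ∞)
    (s : Set E) (x₀ : E) (σ : E → ℝ) (W : ℝ × E → ℝ) (c : ℝ) (d : ℝ)
    (hx₀ : x₀ ∈ s) (hσc : ContinuousOn σ s)
    (hW : ContDiffWithinAt ℝ m W (univ ×ˢ s) (σ x₀, x₀))
    (heq : ∀ y ∈ s, W (σ y, y) = c)
    (hd : d ≠ 0) (hder : HasDerivAt (fun t : ℝ => W (t, x₀)) d (σ x₀)) :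
    ContDiffWithinAt ℝ m σ s x₀ := by
  have hkey : ∀ m' : ℕ, (m' : WithTop ℕ∞) ≤ (m : WithTop ℕ∞) → ContDiffWithinAt ℝ m' σ s x₀ :=
    fun m' hm' => wift_nat m' s x₀ σ W c d hx₀ hσc (hW.of_le hm') heq hd hder
  cases m with
  | top =>
    rw [show ((⊤ : ℕ∞) : WithTop ℕ∞) = ∞ from rfl, contDiffWithinAt_infty]
    exact fun m' => hkey m' (by exact_mod_cast le_top)
  | coe m' =>
    exact hkey m' le_rfl


/-- The flow map `F(t,x) = Φ^t(x)` is a homeomorphism of `ℝ × L` onto `B \ {x*}`, where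
`L = V⁻¹(c)` is a level set of a proper strict Lyapunov function `V` on the basin `B`;
moreover if the flow is `C^k` away from the equilibrium and transverse to `L`, then `F`
is a `C^k` diffeomorphism (i.e. its inverse `x ↦ (τ(x), ρ(x))` is also `C^k`). -/
theorem flow_map_from_level_set_is_homeomorphism
    {n : ℕ} {M : Type*} [TopologicalSpace M]
    [ChartedSpace (EuclideanSpace ℝ (Fin n)) M]
    [IsManifold (𝓡 n) (⊤ : ℕ∞) M]
    (Φ : ℝ → M → M)
    (hΦcont : Continuous fun p : ℝ × M => Φ p.1 p.2)
    (hΦ0 : ∀ x, Φ 0 x = x)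
    (hΦadd : ∀ s t x, Φ s (Φ t x) = Φ (s + t) x)
    (x_star : M) (hfix : ∀ t, Φ t x_star = x_star)
    (B : Set M)
    (hB : B = {x : M | Tendsto (fun t : ℝ => Φ t x) atTop (𝓝 x_star)})
    (hBinv : ∀ (t : ℝ) (x : M), x ∈ B → Φ t x ∈ B)
    (V : M → ℝ)
    (hVsmooth : ContMDiffOn (𝓡 n) (modelWithCornersSelf ℝ ℝ) (⊤ : ℕ∞) V B)
    (hVnonneg : ∀ x ∈ B, 0 ≤ V x)
    (hVzero : ∀ x ∈ B, (V x = 0 ↔ x = x_star))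
    (hVstrict : ∀ x ∈ B, x ≠ x_star → StrictAnti fun t : ℝ => V (Φ t x))
    (hVproper : ∀ K : Set ℝ, IsCompact K → IsCompact {x ∈ B | V x ∈ K})
    (c : ℝ) (hc : 0 < c) (L : Set M) (hLdef : L = {x ∈ B | V x = c})
    (hLne : L.Nonempty)
    (hLtransverse : ∀ x ∈ L, ∃ d : ℝ, d ≠ 0 ∧ HasDerivAt (fun t : ℝ => V (Φ t x)) d 0)
    (k : ℕ∞) :
    (∃ F : (ℝ × L) ≃ₜ (B \ {x_star} : Set M),
        ∀ p : ℝ × L, (F p : M) = Φ p.1 (p.2 : M)) ∧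
      (ContMDiffOn ((modelWithCornersSelf ℝ ℝ).prod (𝓡 n)) (𝓡 n) k
          (fun p : ℝ × M => Φ p.1 p.2) (univ ×ˢ (B \ {x_star})) →
        ∃ (τ : M → ℝ) (ρ : M → M),
          ContMDiffOn (𝓡 n) (modelWithCornersSelf ℝ ℝ) k τ (B \ {x_star}) ∧
          ContMDiffOn (𝓡 n) (𝓡 n) k ρ (B \ {x_star}) ∧
          ∀ x ∈ B \ {x_star}, ρ x ∈ L ∧ Φ (τ x) (ρ x) = x) := by
  have hxB : x_star ∈ B := by
    rw [hB]
    simp only [mem_setOf_eq, hfix]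
    exact tendsto_const_nhds
  have hVx0 : V x_star = 0 := (hVzero _ hxB).2 rfl
  have hne : ∀ {x : M}, x ∈ B \ {x_star} → x ≠ x_star := fun hx h => hx.2 (by simp [h])
  have hVpos : ∀ x ∈ B \ {x_star}, 0 < V x := by
    intro x hx
    rcases (hVnonneg x hx.1).lt_or_eq with h | h
    · exact h
    · exact absurd ((hVzero x hx.1).1 h.symm) (hne hx)
  have horbS : ∀ (t : ℝ) x, x ∈ B \ {x_star} → Φ t x ∈ B \ {x_star} := by
    intro t x hx
    refine ⟨hBinv t x hx.1, ?_⟩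
    simp only [mem_singleton_iff]
    intro h
    apply hne hx
    have h2 : Φ (-t) (Φ t x) = x := by rw [hΦadd, neg_add_cancel, hΦ0]
    rw [h, hfix] at h2; exact h2.symm
  have hVcont : ContinuousOn V B := hVsmooth.continuousOn
  have hΦcont' : ∀ (t : ℝ), Continuous fun y : M => Φ t y := fun t =>
    hΦcont.comp (continuous_const.prodMk continuous_id)
  have hΦcont'' : ∀ x : M, Continuous fun t : ℝ => Φ t x := fun x =>
    hΦcont.comp (continuous_id.prodMk continuous_const)
  have hVΦcont : ∀ (t : ℝ), ContinuousOn (fun y : M => V (Φ t y)) B := by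
    intro t
    exact hVcont.comp (hΦcont' t).continuousOn (fun y hy => hBinv t y hy)
  have hgcont : ∀ x ∈ B, Continuous fun t : ℝ => V (Φ t x) := by
    intro x hx
    rw [continuous_iff_continuousAt]
    intro t
    have h2 : ContinuousWithinAt V B (Φ t x) := hVcont _ (hBinv t x hx)
    exact h2.tendsto.comp (tendsto_nhdsWithin_of_tendsto_nhds_of_eventually_within _
      (hΦcont'' x).continuousAt (Eventually.of_forall fun s => hBinv s x hx))
  have hgtop : ∀ x ∈ B, Tendsto (fun t : ℝ => V (Φ t x)) atTop (𝓝 0) := by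
    intro x hx
    have h1 : Tendsto (fun t : ℝ => Φ t x) atTop (𝓝[B] x_star) :=
      tendsto_nhdsWithin_of_tendsto_nhds_of_eventually_within _ (by rw [hB] at hx; exact hx)
        (Eventually.of_forall fun s => hBinv s x hx)
    have h2 := (hVcont x_star hxB).tendsto.comp h1
    rwa [hVx0] at h2
  -- existence of a time where V is at least c
  have hgabove : ∀ x ∈ B \ {x_star}, ∃ t : ℝ, c ≤ V (Φ t x) := by
    intro x hx
    by_contra hcon
    push_neg at hcon
    have hganti : StrictAnti fun t : ℝ => V (Φ t x) := hVstrict x hx.1 (hne hx)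
    have hbdd : BddAbove (range fun t : ℝ => V (Φ t x)) :=
      ⟨c, by rintro _ ⟨t, rfl⟩; exact (hcon t).le⟩
    set l := ⨆ t : ℝ, V (Φ t x) with hl
    have hgl : Tendsto (fun t : ℝ => V (Φ t x)) atBot (𝓝 l) :=
      tendsto_atBot_ciSup hganti.antitone hbdd
    have hge : ∀ t : ℝ, V (Φ t x) ≤ l := fun t => le_ciSup hbdd t
    have hVxl : V x ≤ l := by simpa [hΦ0] using hge 0
    have hK : IsCompact {y ∈ B | V y ∈ Icc (V x) l} := hVproper _ isCompact_Icc
    have hFle : Filter.map (fun t : ℝ => Φ t x) atBot ≤ 𝓟 {y ∈ B | V y ∈ Icc (V x) l} := by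
      rw [le_principal_iff, mem_map]
      filter_upwards [eventually_le_atBot (0 : ℝ)] with t ht
      refine ⟨hBinv t x hx.1, ?_, hge t⟩
      rcases eq_or_lt_of_le ht with h | h
      · simp [h, hΦ0]
      · simpa [hΦ0] using (hganti h).le
    obtain ⟨z, hzK, hcl⟩ := hK.exists_clusterPt hFle
    have hzB : z ∈ B := hzK.1
    have hzpos : 0 < V z := lt_of_lt_of_le (hVpos x hx) hzK.2.1
    have hzne : z ≠ x_star := fun h => by rw [h, hVx0] at hzpos; exact lt_irrefl _ hzpos
    have hzS : z ∈ B \ {x_star} := ⟨hzB, by simpa using hzne⟩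
    have h1z : V (Φ 1 z) < V z := by
      have := (hVstrict z hzB hzne) (by norm_num : (0:ℝ) < 1)
      simpa [hΦ0] using this
    set η := l - V (Φ 1 z) with hη
    have hηpos : 0 < η := by
      have : V z ≤ l := hzK.2.2
      simp only [hη]; linarith
    -- a neighborhood of z where V ∘ Φ 1 is small
    have hcontz : ContinuousWithinAt (fun y : M => V (Φ 1 y)) B z := hVΦcont 1 z hzB
    have hsmall : {y : M | V (Φ 1 y) < l - η / 2} ∈ 𝓝[B] z := by
      apply hcontz (Iio_mem_nhds _)
      simp only [hη]; linarith
    obtain ⟨U, hU, hUz, hUsub⟩ := mem_nhdsWithin.1 hsmall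
    -- eventually at -infinity, V (Φ (1+t) x) is close to l
    have hev : ∀ᶠ t : ℝ in atBot, l - η / 2 < V (Φ (1 + t) x) := by
      have h2 : Tendsto (fun t : ℝ => V (Φ (1 + t) x)) atBot (𝓝 l) :=
        hgl.comp (tendsto_atBot_add_const_left _ 1 tendsto_id)
      exact h2.eventually (eventually_gt_nhds (by linarith))
    have hfreq : ∃ᶠ t : ℝ in atBot, Φ t x ∈ U := by
      have hm : MapClusterPt z atBot (fun t : ℝ => Φ t x) := hcl
      exact mapClusterPt_iff_frequently.1 hm U (hU.mem_nhds hUz)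
    obtain ⟨t, htU, htev⟩ := (hfreq.and_eventually hev).exists
    have hmem : Φ t x ∈ U ∩ B := ⟨htU, hBinv t x hx.1⟩
    have : V (Φ 1 (Φ t x)) < l - η / 2 := hUsub hmem
    rw [hΦadd] at this
    exact absurd htev (not_lt.2 this.le)
  have hhit : ∀ x ∈ B \ {x_star}, ∃ t : ℝ, V (Φ t x) = c := by
    intro x hx
    obtain ⟨t₁, ht₁⟩ := hgabove x hx
    have h2 : {t : ℝ | V (Φ t x) < c} ∈ atTop := (hgtop x hx.1) (Iio_mem_nhds hc)
    obtain ⟨t₂, ht₂, ht₂'⟩ := ((eventually_ge_atTop t₁).and h2).exists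
    have hsub := intermediate_value_Icc' ht₂ ((hgcont x hx.1).continuousOn)
    have hcmem : c ∈ Icc (V (Φ t₂ x)) (V (Φ t₁ x)) := ⟨ht₂'.le, ht₁⟩
    obtain ⟨t, _, ht⟩ := hsub hcmem
    exact ⟨t, ht⟩
  have huniq : ∀ x ∈ B \ {x_star}, ∀ t₁ t₂ : ℝ, V (Φ t₁ x) = c → V (Φ t₂ x) = c → t₁ = t₂ :=
    fun x hx t₁ t₂ h1 h2 => (hVstrict x hx.1 (hne hx)).injective (h1.trans h2.symm)
  have hex : ∀ x : M, ∃ t : ℝ, x ∈ B \ {x_star} → V (Φ t x) = c := by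
    intro x
    by_cases hx : x ∈ B \ {x_star}
    · obtain ⟨t, ht⟩ := hhit x hx; exact ⟨t, fun _ => ht⟩
    · exact ⟨0, fun h => absurd h hx⟩
  choose σ hσ using hex
  have hσuniq : ∀ x ∈ B \ {x_star}, ∀ t : ℝ, V (Φ t x) = c → t = σ x := fun x hx t ht =>
    huniq x hx t (σ x) ht (hσ x hx)
  have hρL : ∀ x ∈ B \ {x_star}, Φ (σ x) x ∈ L := by
    intro x hx
    rw [hLdef]; exact ⟨hBinv _ _ hx.1, hσ x hx⟩
  have hLS : L ⊆ B \ {x_star} := by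
    intro x hx
    rw [hLdef] at hx
    obtain ⟨hxB', hxc⟩ := hx
    refine ⟨hxB', ?_⟩
    simp only [mem_singleton_iff]
    intro h
    rw [h, hVx0] at hxc
    exact absurd hxc.symm (ne_of_gt hc)
  have hσtr : ∀ x ∈ B \ {x_star}, ∀ t : ℝ, σ (Φ t x) = σ x - t := by
    intro x hx t
    refine (hσuniq (Φ t x) (horbS t x hx) (σ x - t) ?_).symm
    rw [hΦadd, sub_add_cancel]
    exact hσ x hx
  have hσL : ∀ x ∈ L, σ x = 0 := by
    intro x hx
    have hx' := hx
    rw [hLdef] at hx'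
    refine (hσuniq x (hLS hx) 0 ?_).symm
    rw [hΦ0]
    exact hx'.2
  have hσcont : ContinuousOn σ (B \ {x_star}) := by
    intro x₀ hx₀
    have hkey : ∀ b : ℝ, V (Φ b x₀) < c → ∀ᶠ x in 𝓝[B \ {x_star}] x₀, V (Φ b x) < c := by
      intro b hb
      have h1 : ContinuousWithinAt (fun y : M => V (Φ b y)) (B \ {x_star}) x₀ :=
        (hVΦcont b x₀ hx₀.1).mono diff_subset
      exact h1 (Iio_mem_nhds hb)
    have hkey' : ∀ b : ℝ, c < V (Φ b x₀) → ∀ᶠ x in 𝓝[B \ {x_star}] x₀, c < V (Φ b x) := by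
      intro b hb
      have h1 : ContinuousWithinAt (fun y : M => V (Φ b y)) (B \ {x_star}) x₀ :=
        (hVΦcont b x₀ hx₀.1).mono diff_subset
      exact h1 (Ioi_mem_nhds hb)
    have hanti : ∀ x ∈ B \ {x_star}, StrictAnti fun t : ℝ => V (Φ t x) := fun x hx =>
      hVstrict x hx.1 (hne hx)
    rw [ContinuousWithinAt]
    refine tendsto_order.2 ⟨?_, ?_⟩
    · intro a ha
      have hgt : c < V (Φ a x₀) := by
        have h2 : V (Φ (σ x₀) x₀) < V (Φ a x₀) := (hanti x₀ hx₀) ha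
        rwa [hσ x₀ hx₀] at h2
      filter_upwards [hkey' a hgt, self_mem_nhdsWithin] with x hx hxS
      by_contra hcon
      push_neg at hcon
      rcases eq_or_lt_of_le hcon with h | h
      · rw [← h, hσ x hxS] at hx; exact lt_irrefl _ hx
      · have h3 : V (Φ a x) < V (Φ (σ x) x) := (hanti x hxS) h
        rw [hσ x hxS] at h3
        exact absurd (hx.trans h3) (lt_irrefl _)
    · intro b hb
      have hlt : V (Φ b x₀) < c := by
        have h2 : V (Φ b x₀) < V (Φ (σ x₀) x₀) := (hanti x₀ hx₀) hb
        rwa [hσ x₀ hx₀] at h2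
      filter_upwards [hkey b hlt, self_mem_nhdsWithin] with x hx hxS
      by_contra hcon
      push_neg at hcon
      rcases eq_or_lt_of_le hcon with h | h
      · rw [h, hσ x hxS] at hx; exact lt_irrefl _ hx
      · have h3 : V (Φ (σ x) x) < V (Φ b x) := (hanti x hxS) h
        rw [hσ x hxS] at h3
        exact absurd (hx.trans h3) (lt_irrefl _)
  -- the homeomorphism
  have hFmem : ∀ (p : ℝ × L), Φ p.1 (p.2 : M) ∈ B \ {x_star} := fun p =>
    horbS p.1 _ (hLS p.2.2)
  have hσres : Continuous fun q : (B \ {x_star} : Set M) => σ (q : M) := by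
    have := hσcont.restrict
    exact this
  refine ⟨⟨{ toFun := fun p => ⟨Φ p.1 (p.2 : M), hFmem p⟩
             invFun := fun q => (-σ (q : M), ⟨Φ (σ (q : M)) (q : M), hρL _ q.2⟩)
             left_inv := ?_
             right_inv := ?_
             continuous_toFun := ?_
             continuous_invFun := ?_ }, fun p => rfl⟩, ?_⟩
  · rintro ⟨t, x, hxL⟩
    have hxS : x ∈ B \ {x_star} := hLS hxL
    have h1 : σ (Φ t x) = -t := by rw [hσtr x hxS t, hσL x hxL, zero_sub]
    refine Prod.ext (by simp [h1]) (Subtype.ext ?_)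
    simp only [h1]
    rw [hΦadd, neg_add_cancel, hΦ0]
  · rintro ⟨x, hxS⟩
    refine Subtype.ext ?_
    simp only
    rw [hΦadd, neg_add_cancel, hΦ0]
  · exact Continuous.subtype_mk
      (hΦcont.comp (continuous_fst.prodMk (continuous_subtype_val.comp continuous_snd))) _
  · refine Continuous.prodMk (hσres.neg) (Continuous.subtype_mk ?_ _)
    exact hΦcont.comp (hσres.prodMk continuous_subtype_val)
  -- Part B
  · intro hsmooth
    have hWsm : ContMDiffOn ((modelWithCornersSelf ℝ ℝ).prod (𝓡 n)) (modelWithCornersSelf ℝ ℝ) k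
        (fun p : ℝ × M => V (Φ p.1 p.2)) (univ ×ˢ (B \ {x_star})) := by
      refine ContMDiffOn.comp (hVsmooth.of_le (by exact_mod_cast (le_top : k ≤ ⊤))) hsmooth ?_
      intro p hp
      exact hBinv p.1 p.2 hp.2.1
    have hσsmooth : ContMDiffOn (𝓡 n) (modelWithCornersSelf ℝ ℝ) k σ (B \ {x_star}) := by
      intro x₀ hx₀
      obtain ⟨d, hd0, hdd⟩ := hLtransverse (Φ (σ x₀) x₀) (hρL x₀ hx₀)
      have hshift : HasDerivAt (fun t : ℝ => V (Φ t x₀)) d (σ x₀) := by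
        have h1 : HasDerivAt (fun t : ℝ => t - σ x₀) 1 (σ x₀) := (hasDerivAt_id _).sub_const _
        have h2 : HasDerivAt ((fun s' : ℝ => V (Φ s' (Φ (σ x₀) x₀))) ∘ fun t : ℝ => t - σ x₀)
            (d * 1) (σ x₀) := by
          apply HasDerivAt.comp
          · simpa using hdd
          · exact h1
        have h3 : ((fun s' : ℝ => V (Φ s' (Φ (σ x₀) x₀))) ∘ fun t : ℝ => t - σ x₀)
            = fun t : ℝ => V (Φ t x₀) := by
          funext t
          simp only [Function.comp_apply]
          rw [hΦadd, sub_add_cancel]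
        rw [h3, mul_one] at h2
        exact h2
      rw [contMDiffWithinAt_iff']
      refine ⟨hσcont x₀ hx₀, ?_⟩
      set ψ := extChartAt (𝓡 n) x₀ with hψ
      have h0 : ψ.symm (ψ x₀) = x₀ := extChartAt_to_inv x₀
      -- simplify the target statement
      simp only [extChartAt_model_space_eq_id, PartialEquiv.refl_coe, PartialEquiv.refl_source,
        preimage_univ, inter_univ, Function.id_comp]
      have hWat := hWsm ((σ x₀, x₀) : ℝ × M) (mem_prod.2 ⟨mem_univ (σ x₀), hx₀⟩)
      rw [contMDiffWithinAt_iff'] at hWat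
      have hW2 := hWat.2
      simp only [extChartAt_prod, extChartAt_model_space_eq_id, PartialEquiv.refl_coe,
        PartialEquiv.refl_source, preimage_univ, inter_univ, PartialEquiv.prod_symm,
        PartialEquiv.refl_symm, PartialEquiv.prod_target, Function.id_comp,
        Function.comp_def, PartialEquiv.prod_coe, id_eq, PartialEquiv.refl_target] at hW2
      set s' := ψ.target ∩ ↑ψ.symm ⁻¹' (B \ {x_star}) with hs'
      have hseteq : Set.univ ×ˢ ψ.target ∩
          (fun p : ℝ × EuclideanSpace ℝ (Fin n) => (p.1, ψ.symm p.2)) ⁻¹'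
            (Set.univ ×ˢ (B \ {x_star})) = Set.univ ×ˢ s' := by
        ext ⟨t, u⟩
        simp only [hs', mem_inter_iff, mem_prod, mem_univ, true_and, mem_preimage]
      refine wift (k : ℕ∞) s' (ψ x₀) (σ ∘ ↑ψ.symm)
        (fun p : ℝ × EuclideanSpace ℝ (Fin n) => V (Φ p.1 (ψ.symm p.2))) c d ?_ ?_ ?_ ?_ hd0 ?_
      · exact ⟨mem_extChartAt_target x₀, by rw [mem_preimage, h0]; exact hx₀⟩
      · refine ContinuousOn.comp hσcont ((continuousOn_extChartAt_symm x₀).mono inter_subset_left) ?_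
        exact fun z hz => hz.2
      · simp only [Function.comp_apply, h0]
        rw [← hseteq]
        exact hW2
      · intro z hz
        exact hσ _ hz.2
      · simp only [Function.comp_apply, h0]
        exact hshift
    have hρsmooth : ContMDiffOn (𝓡 n) (𝓡 n) k (fun x => Φ (σ x) x) (B \ {x_star}) := by
      refine ContMDiffOn.comp (I' := (modelWithCornersSelf ℝ ℝ).prod (𝓡 n)) hsmooth
        (hσsmooth.prodMk contMDiffOn_id) ?_
      intro x hx
      exact ⟨mem_univ _, hx⟩
    refine ⟨fun x => -σ x, fun x => Φ (σ x) x, hσsmooth.neg, hρsmooth, ?_⟩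
    intro x hx
    refine ⟨hρL x hx, ?_⟩
    rw [hΦadd, neg_add_cancel, hΦ0]
end

section
/- Let Φ be a C^0 flow on a smooth manifold M with asymptotically stable equilibrium x* and basin B, and let V : B → [0,∞) be a proper smooth strict Lyapunov function. For c > 0, the sublevel set V⁻¹([0,c]) is compact and contractible: the flow provides a deformation retraction of V⁻¹([0,c]) onto {x*}. Consequently its boundary L = V⁻¹(c) is homotopy equivalent to the sphere S^{n-1}, where n = dim M. -/
open Filter Topology Set
open scoped Manifold


/-- 2-out-of-6 sandwich lemma: if `i : W → X`, `j : X → Y`, `k : Y → Z` are such that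
`j ∘ i` and `k ∘ j` are homotopy equivalences, then `j` is a homotopy equivalence. -/
theorem lyap_aux_sandwich {W X Y Z : Type*} [TopologicalSpace W] [TopologicalSpace X]
    [TopologicalSpace Y] [TopologicalSpace Z]
    (i : C(W, X)) (j : C(X, Y)) (k : C(Y, Z))
    (r : C(Y, W)) (hr1 : (r.comp (j.comp i)).Homotopic (ContinuousMap.id W))
    (hr2 : ((j.comp i).comp r).Homotopic (ContinuousMap.id Y))
    (ρ : C(Z, X)) (hρ1 : (ρ.comp (k.comp j)).Homotopic (ContinuousMap.id X))
    (hρ2 : ((k.comp j).comp ρ).Homotopic (ContinuousMap.id Z)) :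
    Nonempty (ContinuousMap.HomotopyEquiv X Y) := by
  refine ⟨⟨j, ρ.comp k, ?_, ?_⟩⟩
  · -- (ρ.comp k).comp j ≃ id X
    have : (ρ.comp k).comp j = ρ.comp (k.comp j) := by
      rw [ContinuousMap.comp_assoc]
    rw [this]
    exact hρ1
  · -- j.comp (ρ.comp k) ≃ id Y
    have h1 : (j.comp (ρ.comp k)).Homotopic ((j.comp (ρ.comp k)).comp ((j.comp i).comp r)) := by
      have := ContinuousMap.Homotopic.comp
        (ContinuousMap.Homotopic.refl (j.comp (ρ.comp k))) hr2.symm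
      simpa [ContinuousMap.comp_id] using this
    have h2 : (j.comp (ρ.comp k)).comp ((j.comp i).comp r)
        = j.comp ((ρ.comp (k.comp j)).comp (i.comp r)) := by
      ext x
      simp [ContinuousMap.comp_apply]
    have h3 : (j.comp ((ρ.comp (k.comp j)).comp (i.comp r))).Homotopic
        (j.comp ((ContinuousMap.id X).comp (i.comp r))) := by
      exact ContinuousMap.Homotopic.comp
        (ContinuousMap.Homotopic.refl j)
        (ContinuousMap.Homotopic.comp hρ1 (ContinuousMap.Homotopic.refl (i.comp r)))
    have h4 : j.comp ((ContinuousMap.id X).comp (i.comp r)) = (j.comp i).comp r := by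
      ext x; simp [ContinuousMap.comp_apply]
    have h5 : (j.comp (ρ.comp k)).Homotopic (j.comp ((ρ.comp (k.comp j)).comp (i.comp r))) :=
      h2 ▸ h1
    exact h5.trans (h3.trans (by rw [h4]; exact hr2))

section EuclideanAux

variable {E : Type*} [NormedAddCommGroup E] [NormedSpace ℝ E]

/-- Inclusion of a small punctured closed ball into a big punctured closed ball is a
deformation retract (clamping radially). -/
theorem lyap_aux_clamp (z₀ : E) {ε₁ ε₂ : ℝ} (h1 : 0 < ε₁) (h12 : ε₁ ≤ ε₂) :
    ∃ r : C((Metric.closedBall z₀ ε₂ \ {z₀} : Set E), (Metric.closedBall z₀ ε₁ \ {z₀} : Set E)),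
      r.comp (ContinuousMap.inclusion
        (diff_subset_diff_left (Metric.closedBall_subset_closedBall h12))) =
          ContinuousMap.id _ ∧
      ((ContinuousMap.inclusion
        (diff_subset_diff_left (Metric.closedBall_subset_closedBall h12))).comp r).Homotopic
          (ContinuousMap.id _) := by
  have hvne : ∀ x : ↥(Metric.closedBall z₀ ε₂ \ {z₀} : Set E), (0:ℝ) < ‖(x:E) - z₀‖ := by
    rintro ⟨x, hx1, hx2⟩
    simpa [norm_sub_pos_iff, sub_ne_zero] using fun h => hx2 (by simp [h])
  have hvle : ∀ x : ↥(Metric.closedBall z₀ ε₂ \ {z₀} : Set E), ‖(x:E) - z₀‖ ≤ ε₂ := by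
    rintro ⟨x, hx1, hx2⟩
    simpa [Metric.mem_closedBall, dist_eq_norm] using hx1
  set m : ↥(Metric.closedBall z₀ ε₂ \ {z₀} : Set E) → ℝ :=
    fun x => min 1 (ε₁ / ‖(x:E) - z₀‖) with hmdef
  have hm_pos : ∀ x, 0 < m x := fun x => lt_min one_pos (div_pos h1 (hvne x))
  have hm_le1 : ∀ x, m x ≤ 1 := fun x => min_le_left _ _
  have hm_mul : ∀ x, m x * ‖(x:E) - z₀‖ ≤ ε₁ := by
    intro x
    rcases min_cases 1 (ε₁ / ‖(x:E) - z₀‖) with ⟨h, hle⟩ | ⟨h, hle⟩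
    · have hmx : m x = 1 := h
      rw [hmx, one_mul]
      exact (one_le_div (hvne x)).mp hle
    · have hmx : m x = ε₁ / ‖(x:E) - z₀‖ := h
      rw [hmx, div_mul_cancel₀ _ (hvne x).ne']
  -- membership of scaled points
  have hmem2 : ∀ (a : ℝ) (x : ↥(Metric.closedBall z₀ ε₂ \ {z₀} : Set E)), 0 < a → a ≤ 1 →
      z₀ + a • ((x:E) - z₀) ∈ (Metric.closedBall z₀ ε₂ \ {z₀} : Set E) := by
    intro a x ha ha1
    constructor
    · rw [Metric.mem_closedBall, dist_eq_norm]
      have : z₀ + a • ((x:E) - z₀) - z₀ = a • ((x:E) - z₀) := by abel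
      rw [this, norm_smul, Real.norm_eq_abs, abs_of_pos ha]
      calc a * ‖(x:E) - z₀‖ ≤ 1 * ‖(x:E) - z₀‖ :=
            mul_le_mul_of_nonneg_right ha1 (hvne x).le
        _ = ‖(x:E) - z₀‖ := one_mul _
        _ ≤ ε₂ := hvle x
    · simp only [mem_singleton_iff]
      intro h
      have h0 : a • ((x:E) - z₀) = 0 := by
        have h' : z₀ + a • ((x:E) - z₀) = z₀ := h
        rwa [add_eq_left] at h'
      rcases smul_eq_zero.mp h0 with h' | h'
      · exact ha.ne' h'
      · exact (hvne x).ne' (by rw [h', norm_zero])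
  have hmem1 : ∀ x : ↥(Metric.closedBall z₀ ε₂ \ {z₀} : Set E),
      z₀ + m x • ((x:E) - z₀) ∈ (Metric.closedBall z₀ ε₁ \ {z₀} : Set E) := by
    intro x
    constructor
    · rw [Metric.mem_closedBall, dist_eq_norm]
      have : z₀ + m x • ((x:E) - z₀) - z₀ = m x • ((x:E) - z₀) := by abel
      rw [this, norm_smul, Real.norm_eq_abs, abs_of_pos (hm_pos x)]
      exact hm_mul x
    · exact ((hmem2 (m x) x (hm_pos x) (hm_le1 x)).2 : _)
  have hmcont : Continuous m := by
    apply continuous_const.min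
    exact continuous_const.div ((continuous_subtype_val.sub continuous_const).norm)
      (fun x => (hvne x).ne')
  refine ⟨⟨fun x => ⟨z₀ + m x • ((x:E) - z₀), hmem1 x⟩, ?_⟩, ?_, ?_⟩
  · exact (continuous_const.add (hmcont.smul
      (continuous_subtype_val.sub continuous_const))).subtype_mk _
  · -- r ∘ incl = id
    ext x
    have hx1 : ‖(x:E) - z₀‖ ≤ ε₁ := by
      simpa [Metric.mem_closedBall, dist_eq_norm] using x.2.1
    have hpos : (0:ℝ) < ‖(x:E) - z₀‖ := by
      have hx2 := x.2.2
      simp only [mem_singleton_iff] at hx2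
      have : (x:E) - z₀ ≠ 0 := sub_ne_zero.mpr hx2
      simpa [norm_sub_pos_iff, sub_ne_zero] using hx2
    show z₀ + min 1 (ε₁ / ‖(x:E) - z₀‖) • ((x:E) - z₀) = (x:E)
    rw [min_eq_left ((one_le_div hpos).mpr hx1), one_smul]
    abel
  · -- incl ∘ r ≃ id
    have hmemH : ∀ p : unitInterval × ↥(Metric.closedBall z₀ ε₂ \ {z₀} : Set E),
        z₀ + ((1 - (p.1:ℝ)) * m p.2 + (p.1:ℝ)) • ((p.2:E) - z₀)
          ∈ (Metric.closedBall z₀ ε₂ \ {z₀} : Set E) := by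
      rintro ⟨s, x⟩
      have h1' := s.2.1
      have h2' := s.2.2
      apply hmem2
      · have key : (0:ℝ) ≤ (s:ℝ) * (1 - m x) :=
          mul_nonneg h1' (sub_nonneg.mpr (hm_le1 x))
        nlinarith [hm_pos x]
      · have key : (1 - (s:ℝ)) * m x ≤ (1 - (s:ℝ)) * 1 :=
          mul_le_mul_of_nonneg_left (hm_le1 x) (by linarith)
        nlinarith
    refine ⟨{ toFun := fun p => ⟨z₀ + ((1 - (p.1:ℝ)) * m p.2 + (p.1:ℝ)) • ((p.2:E) - z₀),
                hmemH p⟩,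
              continuous_toFun := ?_, map_zero_left := ?_, map_one_left := ?_ }⟩
    · apply Continuous.subtype_mk
      apply continuous_const.add
      apply Continuous.smul
      · apply Continuous.add
        · exact (continuous_const.sub
            (continuous_subtype_val.comp continuous_fst)).mul (hmcont.comp continuous_snd)
        · exact continuous_subtype_val.comp continuous_fst
      · exact (continuous_subtype_val.comp continuous_snd).sub continuous_const
    · intro x
      apply Subtype.ext
      show z₀ + ((1 - ((0:unitInterval):ℝ)) * m x + ((0:unitInterval):ℝ)) • ((x:E) - z₀)
        = z₀ + m x • ((x:E) - z₀)
      norm_num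
    · intro x
      apply Subtype.ext
      show z₀ + ((1 - ((1:unitInterval):ℝ)) * m x + ((1:unitInterval):ℝ)) • ((x:E) - z₀) = (x:E)
      simp

/-- The punctured closed ball deformation-retracts onto its boundary sphere. -/
theorem lyap_aux_sphere (z₀ : E) {ε : ℝ} (hε : 0 < ε)
    (hsub : (Metric.sphere z₀ ε : Set E) ⊆ (Metric.closedBall z₀ ε \ {z₀} : Set E)) :
    ∃ r : C((Metric.closedBall z₀ ε \ {z₀} : Set E), (Metric.sphere z₀ ε : Set E)),
      r.comp (ContinuousMap.inclusion hsub) = ContinuousMap.id _ ∧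
      ((ContinuousMap.inclusion hsub).comp r).Homotopic (ContinuousMap.id _) := by
  have hvne : ∀ x : ↥(Metric.closedBall z₀ ε \ {z₀} : Set E), (0:ℝ) < ‖(x:E) - z₀‖ := by
    rintro ⟨x, hx1, hx2⟩
    simp only [mem_singleton_iff] at hx2
    simpa [norm_sub_pos_iff, sub_ne_zero] using hx2
  have hvle : ∀ x : ↥(Metric.closedBall z₀ ε \ {z₀} : Set E), ‖(x:E) - z₀‖ ≤ ε := by
    rintro ⟨x, hx1, hx2⟩
    simpa [Metric.mem_closedBall, dist_eq_norm] using hx1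
  have hnorm : ∀ (a : ℝ) (x : ↥(Metric.closedBall z₀ ε \ {z₀} : Set E)), 0 ≤ a →
      ‖z₀ + a • ((x:E) - z₀) - z₀‖ = a * ‖(x:E) - z₀‖ := by
    intro a x ha
    have h : z₀ + a • ((x:E) - z₀) - z₀ = a • ((x:E) - z₀) := by abel
    rw [h, norm_smul, Real.norm_eq_abs, abs_of_nonneg ha]
  have hmemS : ∀ x : ↥(Metric.closedBall z₀ ε \ {z₀} : Set E),
      z₀ + (ε / ‖(x:E) - z₀‖) • ((x:E) - z₀) ∈ (Metric.sphere z₀ ε : Set E) := by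
    intro x
    rw [Metric.mem_sphere, dist_eq_norm, hnorm _ _ (div_nonneg hε.le (hvne x).le),
      div_mul_cancel₀ _ (hvne x).ne']
  have hscont : Continuous fun x : ↥(Metric.closedBall z₀ ε \ {z₀} : Set E) =>
      (ε / ‖(x:E) - z₀‖) := continuous_const.div
    ((continuous_subtype_val.sub continuous_const).norm) (fun x => (hvne x).ne')
  refine ⟨⟨fun x => ⟨z₀ + (ε / ‖(x:E) - z₀‖) • ((x:E) - z₀), hmemS x⟩, ?_⟩, ?_, ?_⟩
  · exact (continuous_const.add (hscont.smul
      (continuous_subtype_val.sub continuous_const))).subtype_mk _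
  · ext x
    have hx : ‖(x:E) - z₀‖ = ε := by
      have := x.2
      simpa [Metric.mem_sphere, dist_eq_norm] using this
    show z₀ + (ε / ‖(x:E) - z₀‖) • ((x:E) - z₀) = (x:E)
    rw [hx, div_self hε.ne', one_smul]
    abel
  · have hmemH : ∀ p : unitInterval × ↥(Metric.closedBall z₀ ε \ {z₀} : Set E),
        z₀ + ((1 - (p.1:ℝ)) * (ε / ‖(p.2:E) - z₀‖) + (p.1:ℝ)) • ((p.2:E) - z₀)
          ∈ (Metric.closedBall z₀ ε \ {z₀} : Set E) := by
      rintro ⟨s, x⟩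
      have h1' := s.2.1
      have h2' := s.2.2
      have hd : (0:ℝ) < ε / ‖(x:E) - z₀‖ := div_pos hε (hvne x)
      have hsc : (0:ℝ) < (1 - (s:ℝ)) * (ε / ‖(x:E) - z₀‖) + (s:ℝ) := by
        rcases eq_or_lt_of_le h2' with h | h
        · rw [h]; norm_num
        · have : (0:ℝ) < (1 - (s:ℝ)) * (ε / ‖(x:E) - z₀‖) :=
            mul_pos (by linarith) hd
          linarith
      constructor
      · rw [Metric.mem_closedBall, dist_eq_norm, hnorm _ _ hsc.le]
        have hexp : ((1 - (s:ℝ)) * (ε / ‖(x:E) - z₀‖) + (s:ℝ)) * ‖(x:E) - z₀‖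
            = (1 - (s:ℝ)) * ε + (s:ℝ) * ‖(x:E) - z₀‖ := by
          rw [add_mul, mul_assoc, div_mul_cancel₀ _ (hvne x).ne']
        rw [hexp]
        nlinarith [hvle x]
      · simp only [mem_singleton_iff]
        intro h
        have h0 : ((1 - (s:ℝ)) * (ε / ‖(x:E) - z₀‖) + (s:ℝ)) • ((x:E) - z₀) = 0 := by
          have h' : z₀ + ((1 - (s:ℝ)) * (ε / ‖(x:E) - z₀‖) + (s:ℝ)) • ((x:E) - z₀) = z₀ := h
          rwa [add_eq_left] at h'
        rcases smul_eq_zero.mp h0 with h' | h'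
        · exact hsc.ne' h'
        · exact (hvne x).ne' (by rw [h', norm_zero])
    refine ⟨{ toFun := fun p => ⟨z₀ + ((1 - (p.1:ℝ)) * (ε / ‖(p.2:E) - z₀‖) + (p.1:ℝ)) •
                ((p.2:E) - z₀), hmemH p⟩,
              continuous_toFun := ?_, map_zero_left := ?_, map_one_left := ?_ }⟩
    · apply Continuous.subtype_mk
      apply continuous_const.add
      apply Continuous.smul
      · apply Continuous.add
        · exact (continuous_const.sub
            (continuous_subtype_val.comp continuous_fst)).mul (hscont.comp continuous_snd)
        · exact continuous_subtype_val.comp continuous_fst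
      · exact (continuous_subtype_val.comp continuous_snd).sub continuous_const
    · intro x
      apply Subtype.ext
      show z₀ + ((1 - ((0:unitInterval):ℝ)) * (ε / ‖(x:E) - z₀‖) + ((0:unitInterval):ℝ)) •
        ((x:E) - z₀) = z₀ + (ε / ‖(x:E) - z₀‖) • ((x:E) - z₀)
      norm_num
    · intro x
      apply Subtype.ext
      show z₀ + ((1 - ((1:unitInterval):ℝ)) * (ε / ‖(x:E) - z₀‖) + ((1:unitInterval):ℝ)) •
        ((x:E) - z₀) = (x:E)
      simp

/-- Any sphere of positive radius is homeomorphic to the unit sphere centered at `0`. -/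
noncomputable def lyapAuxSphereHomeo (z₀ : E) {ε : ℝ} (hε : 0 < ε) :
    Homeomorph (Metric.sphere z₀ ε : Set E) (Metric.sphere (0:E) 1 : Set E) where
  toFun := fun y => ⟨ε⁻¹ • ((y:E) - z₀), by
    have hy : ‖(y:E) - z₀‖ = ε := by simpa [Metric.mem_sphere, dist_eq_norm] using y.2
    simp [Metric.mem_sphere, dist_eq_norm, norm_smul, hy, abs_of_pos hε,
      inv_mul_cancel₀ hε.ne']⟩
  invFun := fun x => ⟨z₀ + ε • (x:E), by
    have hx : ‖(x:E)‖ = 1 := by simpa [Metric.mem_sphere, dist_eq_norm] using x.2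
    have : z₀ + ε • (x:E) - z₀ = ε • (x:E) := by abel
    simp [Metric.mem_sphere, dist_eq_norm, this, norm_smul, hx, abs_of_pos hε]⟩
  left_inv := by
    rintro ⟨y, hy⟩
    apply Subtype.ext
    show z₀ + ε • (ε⁻¹ • (y - z₀)) = y
    rw [smul_smul, mul_inv_cancel₀ hε.ne', one_smul]
    abel
  right_inv := by
    rintro ⟨x, hx⟩
    apply Subtype.ext
    show ε⁻¹ • (z₀ + ε • x - z₀) = x
    have : z₀ + ε • x - z₀ = ε • x := by abel
    rw [this, smul_smul, inv_mul_cancel₀ hε.ne', one_smul]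
  continuous_toFun := by
    apply Continuous.subtype_mk
    exact continuous_const.smul (continuous_subtype_val.sub continuous_const)
  continuous_invFun := by
    apply Continuous.subtype_mk
    exact continuous_const.add (continuous_const.smul continuous_subtype_val)

end EuclideanAux

/-- For a proper strict Lyapunov function `V` on the basin `B` of an asymptotically stable
equilibrium `x*` of a continuous flow on a smooth `n`-manifold, each sublevel set
`V⁻¹([0,c])` (`c > 0`) is compact and contractible, and its boundary `L = V⁻¹(c)` is
homotopy equivalent to the sphere `S^{n-1}`. -/
theorem lyapunov_sublevel_compact_contractible_boundary_sphere
    {n : ℕ} {M : Type*} [TopologicalSpace M] [T2Space M]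
    [ChartedSpace (EuclideanSpace ℝ (Fin n)) M]
    [IsManifold (𝓡 n) (⊤ : ℕ∞) M]
    (Φ : ℝ → M → M)
    (hΦcont : Continuous fun p : ℝ × M => Φ p.1 p.2)
    (hΦ0 : ∀ x, Φ 0 x = x)
    (hΦadd : ∀ s t x, Φ s (Φ t x) = Φ (s + t) x)
    (x_star : M) (hfix : ∀ t, Φ t x_star = x_star)
    (hstable : ∀ U ∈ 𝓝 x_star, ∃ W ∈ 𝓝 x_star, ∀ x ∈ W, ∀ t : ℝ, 0 ≤ t → Φ t x ∈ U)
    (B : Set M)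
    (hB : B = {x : M | Tendsto (fun t : ℝ => Φ t x) atTop (𝓝 x_star)})
    (hattr : B ∈ 𝓝 x_star)
    (hBinv : ∀ (t : ℝ) (x : M), x ∈ B → Φ t x ∈ B)
    (V : M → ℝ)
    (hVsmooth : ContMDiffOn (𝓡 n) (modelWithCornersSelf ℝ ℝ) (⊤ : ℕ∞) V B)
    (hVnonneg : ∀ x ∈ B, 0 ≤ V x)
    (hVzero : ∀ x ∈ B, (V x = 0 ↔ x = x_star))
    (hVstrict : ∀ x ∈ B, x ≠ x_star → StrictAnti fun t : ℝ => V (Φ t x))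
    (hVproper : ∀ K : Set ℝ, IsCompact K → IsCompact {x ∈ B | V x ∈ K})
    (c : ℝ) (hc : 0 < c) :
    IsCompact {x ∈ B | V x ≤ c} ∧
      ContractibleSpace {x ∈ B | V x ≤ c} ∧
      Nonempty
        (ContinuousMap.HomotopyEquiv {x ∈ B | V x = c}
          (Metric.sphere (0 : EuclideanSpace ℝ (Fin n)) 1)) := by
  have hxB : x_star ∈ B := by
    rw [hB]; simp only [mem_setOf_eq, hfix]; exact tendsto_const_nhds
  have hVxs : V x_star = 0 := (hVzero _ hxB).mpr rfl
  set K : Set M := {x ∈ B | V x ≤ c} with hKdef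
  have hxK : x_star ∈ K := ⟨hxB, by rw [hVxs]; exact hc.le⟩
  have hKcomp : IsCompact K := by
    have hKeq : K = {x ∈ B | V x ∈ Icc 0 c} := by
      ext x
      simp only [hKdef, mem_setOf_eq, mem_Icc]
      exact ⟨fun h => ⟨h.1, hVnonneg x h.1, h.2⟩, fun h => ⟨h.1, h.2.2⟩⟩
    rw [hKeq]; exact hVproper _ isCompact_Icc
  have hdec : ∀ x ∈ B, ∀ t : ℝ, 0 ≤ t → V (Φ t x) ≤ V x := by
    intro x hx t ht
    by_cases hne : x = x_star
    · subst hne; simp [hfix]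
    · have h := (hVstrict x hx hne).antitone ht
      simpa [hΦ0] using h
  have hKinv : ∀ x ∈ K, ∀ t : ℝ, 0 ≤ t → Φ t x ∈ K := fun x hx t ht =>
    ⟨hBinv t x hx.1, le_trans (hdec x hx.1 t ht) hx.2⟩
  -- uniform attraction on the compact sublevel set
  have hunif : ∀ U ∈ 𝓝 x_star, ∃ T : ℝ, 0 ≤ T ∧ ∀ x ∈ K, ∀ t : ℝ, T ≤ t → Φ t x ∈ U := by
    intro U hU
    obtain ⟨W, hW, hWs⟩ := hstable U hU
    have hWint : interior W ∈ 𝓝 x_star := interior_mem_nhds.mpr hW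
    have hsel : ∀ x : K, ∃ T : ℝ, 0 ≤ T ∧ Φ T (x : M) ∈ interior W := by
      rintro ⟨x, hx⟩
      have hxB' : Tendsto (fun t : ℝ => Φ t x) atTop (𝓝 x_star) := by
        have := hx.1; rw [hB] at this; exact this
      obtain ⟨a, ha⟩ := mem_atTop_sets.mp (hxB' hWint)
      exact ⟨max a 0, le_max_right _ _, ha _ (le_max_left _ _)⟩
    choose T hT0 hTW using hsel
    have hNopen : ∀ x : K, IsOpen ((fun y => Φ (T x) y) ⁻¹' interior W) := fun x =>
      isOpen_interior.preimage (hΦcont.comp (continuous_const.prodMk continuous_id))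
    have hcov : K ⊆ ⋃ x : K, (fun y => Φ (T x) y) ⁻¹' interior W := by
      intro y hy
      exact mem_iUnion.mpr ⟨⟨y, hy⟩, hTW ⟨y, hy⟩⟩
    obtain ⟨t, ht⟩ := hKcomp.elim_finite_subcover _ hNopen hcov
    obtain ⟨T₀, hT₀0, hT₀⟩ : ∃ T₀ : ℝ, 0 ≤ T₀ ∧ ∀ i ∈ t, T i ≤ T₀ := by
      obtain ⟨M0, hM0⟩ := (t.image T).exists_le
      exact ⟨max M0 0, le_max_right _ _, fun i hi =>
        le_trans (hM0 _ (Finset.mem_image_of_mem T hi)) (le_max_left _ _)⟩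
    refine ⟨T₀, hT₀0, fun x hx s hs => ?_⟩
    obtain ⟨i, hi, hxN⟩ := mem_iUnion₂.mp (ht hx)
    have hTi : T i ≤ s := le_trans (hT₀ i hi) hs
    have := hWs _ (interior_subset hxN) (s - T i) (by linarith)
    rw [hΦadd] at this
    simpa [sub_add_cancel] using this
  -- the contraction
  set g : unitInterval × ↥K → M :=
    fun p => if (p.1 : ℝ) < 1 then Φ ((p.1 : ℝ) / (1 - (p.1 : ℝ))) (p.2 : M) else x_star
    with hgdef
  have hgK : ∀ p, g p ∈ K := by
    rintro ⟨s, x⟩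
    by_cases h : (s : ℝ) < 1
    · simp only [hgdef, if_pos h]
      exact hKinv _ x.2 _ (div_nonneg s.2.1 (by linarith))
    · simp only [hgdef, if_neg h]
      exact hxK
  have cfst : Continuous fun p : unitInterval × ↥K => (p.1 : ℝ) :=
    continuous_subtype_val.comp continuous_fst
  have hgcont : Continuous g := by
    rw [continuous_iff_continuousAt]
    rintro ⟨s, x⟩
    by_cases hs : (s : ℝ) < 1
    · have hopen : IsOpen {p : unitInterval × ↥K | (p.1 : ℝ) < 1} :=
        isOpen_lt cfst continuous_const
      have hcont2 : ContinuousOn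
          (fun p : unitInterval × ↥K => Φ ((p.1 : ℝ) / (1 - (p.1 : ℝ))) (p.2 : M))
          {p | (p.1 : ℝ) < 1} := by
        have hprod : ContinuousOn
            (fun p : unitInterval × ↥K => (((p.1 : ℝ) / (1 - (p.1 : ℝ)), (p.2 : M)) : ℝ × M))
            {p | (p.1 : ℝ) < 1} := by
          apply ContinuousOn.prodMk
          · exact cfst.continuousOn.div ((continuous_const.sub cfst).continuousOn)
              (fun p hp => sub_ne_zero.mpr (ne_of_lt hp).symm)
          · exact (continuous_subtype_val.comp continuous_snd).continuousOn
        exact hΦcont.comp_continuousOn hprod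
      refine (hcont2.continuousAt (hopen.mem_nhds hs)).congr ?_
      exact Filter.eventuallyEq_of_mem (hopen.mem_nhds hs) fun p hp => (if_pos hp).symm
    · have hs1 : (s : ℝ) = 1 := le_antisymm s.2.2 (not_lt.mp hs)
      have hgval : g (s, x) = x_star := if_neg hs
      rw [ContinuousAt, hgval, Filter.tendsto_def]
      intro U hU
      obtain ⟨T, hT0, hTU⟩ := hunif U hU
      have hopen2 : IsOpen {p : unitInterval × ↥K | T / (T + 1) < (p.1 : ℝ)} :=
        isOpen_lt continuous_const cfst
      have hmem : (s, x) ∈ {p : unitInterval × ↥K | T / (T + 1) < (p.1 : ℝ)} := by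
        simp only [mem_setOf_eq, hs1]
        rw [div_lt_one (by linarith)]
        linarith
      apply mem_of_superset (hopen2.mem_nhds hmem)
      rintro ⟨s', x'⟩ hp
      simp only [mem_setOf_eq] at hp
      by_cases h' : (s' : ℝ) < 1
      · have h1s : (0 : ℝ) < 1 - s' := by linarith
        have hTs : T < (s' : ℝ) * (T + 1) := (div_lt_iff₀ (by linarith)).mp hp
        have h2 : T * (1 - (s' : ℝ)) ≤ (s' : ℝ) := by nlinarith
        have hTle : T ≤ (s' : ℝ) / (1 - (s' : ℝ)) := (le_div_iff₀ h1s).mpr h2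
        show g (s', x') ∈ U
        rw [hgdef]
        simp only [if_pos h']
        exact hTU _ x'.2 _ hTle
      · show g (s', x') ∈ U
        rw [hgdef]
        simp only [if_neg h']
        exact mem_of_mem_nhds hU
  have hcontr : ContractibleSpace ↥K := by
    rw [contractible_iff_id_nullhomotopic]
    have hgKcont : Continuous fun p : unitInterval × ↥K => (⟨g p, hgK p⟩ : ↥K) :=
      hgcont.subtype_mk _
    refine ⟨⟨x_star, hxK⟩, ⟨⟨⟨fun p => ⟨g p, hgK p⟩, hgKcont⟩, ?_, ?_⟩⟩⟩
    · intro x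
      apply Subtype.ext
      show g (0, x) = (x : M)
      simp only [hgdef, Set.Icc.coe_zero]
      rw [if_pos (by norm_num : (0:ℝ) < 1)]
      norm_num [hΦ0]
    · intro x
      apply Subtype.ext
      show g (1, x) = x_star
      simp only [hgdef, Set.Icc.coe_one]
      rw [if_neg (lt_irrefl 1)]
  refine ⟨hKcomp, hcontr, ?_⟩
  -- ============ Part 3 ============
  have hVcont : ContinuousOn V B := hVsmooth.continuousOn
  have hgcont2 : ∀ x ∈ B, Continuous fun t : ℝ => V (Φ t x) := fun x hx =>
    hVcont.comp_continuous (hΦcont.comp (continuous_id.prodMk continuous_const))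
      (fun t => hBinv t x hx)
  have hVpos : ∀ x ∈ B, x ≠ x_star → 0 < V x := by
    intro x hx hne
    rcases lt_or_eq_of_le (hVnonneg x hx) with h | h
    · exact h
    · exact absurd ((hVzero x hx).mp h.symm) hne
  have hnever : ∀ (t : ℝ) (x : M), x ≠ x_star → Φ t x ≠ x_star := by
    intro t x hne h
    apply hne
    have h2 : Φ (-t) (Φ t x) = Φ (-t) x_star := by rw [h]
    rw [hΦadd, neg_add_cancel, hΦ0] at h2
    rw [h2, hfix]
  have hg0 : ∀ x ∈ B, Tendsto (fun t : ℝ => V (Φ t x)) atTop (𝓝 0) := by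
    intro x hx
    have h1 : Tendsto (fun t : ℝ => Φ t x) atTop (𝓝[B] x_star) := by
      rw [tendsto_nhdsWithin_iff]
      constructor
      · have hx' := hx; rw [hB] at hx'; exact hx'
      · exact Filter.Eventually.of_forall fun t => hBinv t x hx
    have h2 := (hVcont x_star hxB).tendsto
    rw [hVxs] at h2
    exact h2.comp h1
  -- backward orbits are unbounded in V
  have hub : ∀ x ∈ B, x ≠ x_star → ∀ b : ℝ, ∃ t, t ≤ 0 ∧ b ≤ V (Φ t x) := by
    intro x hx hne b
    by_contra hcon
    push_neg at hcon
    have hVxb : V x < b := by simpa [hΦ0] using hcon 0 le_rfl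
    have hganti : StrictAnti fun t : ℝ => V (Φ t x) := hVstrict x hx hne
    have hbdd : ∀ t : ℝ, V (Φ t x) < b := by
      intro t
      rcases le_or_gt t 0 with h | h
      · exact hcon t h
      · have h1 : V (Φ t x) ≤ V (Φ (0:ℝ) x) := hganti.antitone h.le
        rw [hΦ0] at h1
        exact lt_of_le_of_lt h1 hVxb
    have hbddAbove : BddAbove (range fun t : ℝ => V (Φ t x)) := by
      refine ⟨b, ?_⟩
      rintro y ⟨t, rfl⟩
      exact (hbdd t).le
    have hglim : Tendsto (fun t : ℝ => V (Φ t x)) atBot (𝓝 (⨆ t : ℝ, V (Φ t x))) :=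
      tendsto_atBot_ciSup hganti.antitone hbddAbove
    have horbit : ∀ t : ℝ, t ≤ 0 → Φ t x ∈ {y | y ∈ B ∧ V y ∈ Icc (V x) b} := by
      intro t ht
      refine ⟨hBinv t x hx, ?_, (hcon t ht).le⟩
      have h1 : V (Φ (0:ℝ) x) ≤ V (Φ t x) := hganti.antitone ht
      rwa [hΦ0] at h1
    have hCcomp : IsCompact {y | y ∈ B ∧ V y ∈ Icc (V x) b} := hVproper _ isCompact_Icc
    have hFle : Filter.map (fun t : ℝ => Φ t x) atBot ≤ 𝓟 {y | y ∈ B ∧ V y ∈ Icc (V x) b} := by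
      rw [le_principal_iff, mem_map]
      exact mem_of_superset (Iic_mem_atBot 0) fun t ht => horbit t ht
    obtain ⟨y, hyC, hy⟩ := hCcomp hFle
    have hyB : y ∈ B := hyC.1
    -- every point on the orbit of y has V-value ℓ
    have hVy : ∀ s : ℝ, V (Φ s y) = (⨆ t : ℝ, V (Φ t x)) := by
      intro s
      have hmc : MapClusterPt y atBot fun t : ℝ => Φ t x := hy
      have hc2 : MapClusterPt (Φ s y) atBot ((fun z => Φ s z) ∘ fun t : ℝ => Φ t x) :=
        hmc.tendsto_comp ((hΦcont.comp (continuous_const.prodMk continuous_id)).tendsto y)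
      have hfeq : ((fun z => Φ s z) ∘ fun t : ℝ => Φ t x) = fun t : ℝ => Φ (s + t) x := by
        funext t
        exact hΦadd s t x
      rw [hfeq] at hc2
      -- apply V, using continuity within B
      have hVt : Tendsto V (𝓝 (Φ s y) ⊓ Filter.map (fun t : ℝ => Φ (s + t) x) atBot)
          (𝓝 (V (Φ s y))) := by
        have hle : 𝓝 (Φ s y) ⊓ Filter.map (fun t : ℝ => Φ (s + t) x) atBot
            ≤ 𝓝[B] (Φ s y) := by
          apply le_inf inf_le_left
          refine le_trans inf_le_right (le_principal_iff.mpr ?_)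
          rw [mem_map]
          exact Filter.Eventually.of_forall fun t => hBinv _ x hx
        exact (hVcont _ (hBinv s y hyB)).tendsto.mono_left hle
      have hc3 : MapClusterPt (V (Φ s y)) atBot (V ∘ fun t : ℝ => Φ (s + t) x) :=
        hc2.tendsto_comp' hVt
      -- but V ∘ (shifted flow) tends to the sup
      have hshift : Tendsto (fun t : ℝ => s + t) atBot atBot :=
        tendsto_atBot_add_const_left _ s tendsto_id
      have hlim2 : Tendsto (V ∘ fun t : ℝ => Φ (s + t) x) atBot
          (𝓝 (⨆ t : ℝ, V (Φ t x))) := hglim.comp hshift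
      -- uniqueness of limit points
      have hne2 : (𝓝 (V (Φ s y)) ⊓ 𝓝 (⨆ t : ℝ, V (Φ t x))).NeBot :=
        hc3.clusterPt.mono (Filter.map_mono le_rfl |>.trans hlim2)
      exact eq_of_nhds_neBot hne2
    have hyne : y ≠ x_star := by
      intro h
      have h1 : V y = (⨆ t : ℝ, V (Φ t x)) := by
        have := hVy 0
        rwa [hΦ0] at this
      have h2 : V (Φ (0:ℝ) x) ≤ (⨆ t : ℝ, V (Φ t x)) := le_ciSup hbddAbove 0
      rw [hΦ0] at h2
      rw [h, hVxs] at h1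
      have := hVpos x hx hne
      linarith
    have hcontra := (hVstrict y hyB hyne) one_pos
    simp only at hcontra
    rw [hVy 1, hVy 0] at hcontra
    exact lt_irrefl _ hcontra
  -- global crossing times exist and are unique
  have hcross : ∀ x ∈ B, x ≠ x_star → ∀ b : ℝ, 0 < b → ∃! t : ℝ, V (Φ t x) = b := by
    intro x hx hne b hb
    obtain ⟨tneg, htneg0, htneg⟩ := hub x hx hne b
    obtain ⟨tpos, htpos⟩ := ((hg0 x hx).eventually (gt_mem_nhds hb)).exists
    have hanti := hVstrict x hx hne
    have hlt : tneg < tpos := by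
      by_contra hcon2
      push_neg at hcon2
      have := hanti.antitone hcon2
      linarith
    have hIVT := intermediate_value_Icc' hlt.le ((hgcont2 x hx).continuousOn)
    obtain ⟨t, _, htv⟩ := hIVT ⟨htpos.le, htneg⟩
    exact ⟨t, htv, fun t' ht' => hanti.injective (ht'.trans htv.symm)⟩
  -- ======== chart setup ========
  set E := EuclideanSpace ℝ (Fin n) with hEdef
  set e := chartAt E x_star with hedef
  set z₀ : E := e x_star with hz₀def
  have hxsrc : x_star ∈ e.source := mem_chart_source E x_star
  have hz₀tgt : z₀ ∈ e.target := e.map_source hxsrc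
  have hDnhds : ∀ ε : ℝ, 0 < ε →
      {x | x ∈ e.source ∧ e x ∈ Metric.closedBall z₀ ε} ∈ 𝓝 x_star := by
    intro ε hε
    have h1 : e.source ∈ 𝓝 x_star := e.open_source.mem_nhds hxsrc
    have h2 : ContinuousAt e x_star := e.continuousAt hxsrc
    have h4 := h2 (Metric.closedBall_mem_nhds z₀ hε)
    exact Filter.inter_mem h1 h4
  have hDbasis : ∀ N ∈ 𝓝 x_star, ∃ ε : ℝ, 0 < ε ∧
      {x | x ∈ e.source ∧ e x ∈ Metric.closedBall z₀ ε} ⊆ N := by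
    intro N hN
    have h1 : N ∩ e.source ∈ 𝓝 x_star := Filter.inter_mem hN (e.open_source.mem_nhds hxsrc)
    have h2 : e '' (N ∩ e.source) ∈ 𝓝 z₀ := by
      rw [hz₀def, ← e.map_nhds_eq hxsrc]
      exact Filter.image_mem_map h1
    obtain ⟨ε, hε, hsub⟩ := Metric.nhds_basis_closedBall.mem_iff.mp h2
    refine ⟨ε, hε, ?_⟩
    rintro x ⟨hxsrc', hxball⟩
    obtain ⟨y, hy, hyx⟩ := hsub hxball
    have : y = x := e.injOn hy.2 hxsrc' hyx
    rw [← this]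
    exact hy.1
  have hNlt : ∀ b : ℝ, 0 < b → {x | x ∈ B ∧ V x < b} ∈ 𝓝 x_star := by
    intro b hb
    have h2 : Tendsto V (𝓝[B] x_star) (𝓝 (0:ℝ)) := by
      have h := hVcont x_star hxB
      rwa [ContinuousWithinAt, hVxs] at h
    have h3 := h2 (Iio_mem_nhds hb)
    rw [mem_map, mem_nhdsWithin] at h3
    obtain ⟨U, hUopen, hUx, hUsub⟩ := h3
    refine mem_of_superset (Filter.inter_mem (hUopen.mem_nhds hUx) hattr) ?_
    rintro x ⟨hxU, hxB'⟩
    exact ⟨hxB', hUsub ⟨hxU, hxB'⟩⟩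
  have hKshrink : ∀ N ∈ 𝓝 x_star, ∃ b : ℝ, 0 < b ∧ {x | x ∈ B ∧ V x ≤ b} ⊆ N := by
    intro N hN
    haveI : Nonempty {b : ℝ // 0 < b} := ⟨⟨1, one_pos⟩⟩
    have hdir : Directed (· ⊇ ·) (fun b : {b : ℝ // 0 < b} => {x | x ∈ B ∧ V x ≤ (b:ℝ)}) := by
      rintro a b
      refine ⟨⟨min a b, lt_min a.2 b.2⟩, ?_, ?_⟩
      · intro x hx
        exact ⟨hx.1, le_trans hx.2 (min_le_left _ _)⟩
      · intro x hx
        exact ⟨hx.1, le_trans hx.2 (min_le_right _ _)⟩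
    have hcpct : ∀ b : {b : ℝ // 0 < b}, IsCompact {x | x ∈ B ∧ V x ≤ (b:ℝ)} := by
      intro b
      have heq : {x | x ∈ B ∧ V x ≤ (b:ℝ)} = {x | x ∈ B ∧ V x ∈ Icc 0 (b:ℝ)} := by
        ext x
        exact ⟨fun h => ⟨h.1, hVnonneg x h.1, h.2⟩, fun h => ⟨h.1, h.2.2⟩⟩
      rw [heq]
      exact hVproper _ isCompact_Icc
    have hU : ∀ x ∈ ⋂ b : {b : ℝ // 0 < b}, {x | x ∈ B ∧ V x ≤ (b:ℝ)}, N ∈ 𝓝 x := by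
      intro x hx
      have hxB'' : x ∈ B := (mem_iInter.mp hx ⟨1, one_pos⟩).1
      have hV0 : V x ≤ 0 := by
        by_contra hpos
        push_neg at hpos
        have := (mem_iInter.mp hx ⟨V x / 2, by linarith⟩).2
        simp only at this
        linarith
      have hxeq : x = x_star :=
        (hVzero x hxB'').mp (le_antisymm hV0 (hVnonneg x hxB''))
      rw [hxeq]
      exact hN
    obtain ⟨b, hb⟩ := exists_subset_nhds_of_isCompact' hdir hcpct
      (fun b => (hcpct b).isClosed) hU
    exact ⟨b, b.2, hb⟩
  -- ======== choice of constants ========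
  obtain ⟨ε₀, hε₀pos, hball₀⟩ := Metric.nhds_basis_closedBall.mem_iff.mp
    (e.open_target.mem_nhds hz₀tgt)
  obtain ⟨ε₂', hε₂'pos, hε₂'sub⟩ := hDbasis {x | x ∈ B ∧ V x < c} (hNlt c hc)
  set ε₂ : ℝ := min ε₂' ε₀ with hε₂def
  have hε₂pos : 0 < ε₂ := lt_min hε₂'pos hε₀pos
  have hε₂tgt : Metric.closedBall z₀ ε₂ ⊆ e.target :=
    (Metric.closedBall_subset_closedBall (min_le_right _ _)).trans hball₀
  have hD₂sub : {x | x ∈ e.source ∧ e x ∈ Metric.closedBall z₀ ε₂} ⊆ {x | x ∈ B ∧ V x < c} := by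
    rintro x ⟨h1, h2⟩
    exact hε₂'sub ⟨h1, Metric.closedBall_subset_closedBall (min_le_left _ _) h2⟩
  obtain ⟨c₁, hc₁pos, hc₁sub⟩ := hKshrink
    {x | x ∈ e.source ∧ e x ∈ Metric.closedBall z₀ ε₂} (hDnhds ε₂ hε₂pos)
  obtain ⟨ε₁', hε₁'pos, hε₁'sub⟩ := hDbasis {x | x ∈ B ∧ V x < c₁} (hNlt c₁ hc₁pos)
  set ε₁ : ℝ := min ε₁' ε₂ with hε₁def
  have hε₁pos : 0 < ε₁ := lt_min hε₁'pos hε₂pos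
  have hε₁le : ε₁ ≤ ε₂ := min_le_right _ _
  have hD₁sub : {x | x ∈ e.source ∧ e x ∈ Metric.closedBall z₀ ε₁} ⊆ {x | x ∈ B ∧ V x < c₁} := by
    rintro x ⟨h1, h2⟩
    exact hε₁'sub ⟨h1, Metric.closedBall_subset_closedBall (min_le_left _ _) h2⟩
  -- ======== the six spaces ========
  set A1 : Set M := {x | (x ∈ e.source ∧ e x ∈ Metric.closedBall z₀ ε₁) ∧ x ≠ x_star} with hA1def
  set A2 : Set M := {x | (x ∈ e.source ∧ e x ∈ Metric.closedBall z₀ ε₂) ∧ x ≠ x_star} with hA2def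
  set B1 : Set M := {x | (x ∈ B ∧ V x ≤ c₁) ∧ x ≠ x_star} with hB1def
  set B2 : Set M := {x | (x ∈ B ∧ V x ≤ c) ∧ x ≠ x_star} with hB2def
  have hA1B1 : A1 ⊆ B1 := by
    rintro x ⟨h1, h3⟩
    exact ⟨⟨(hD₁sub h1).1, (hD₁sub h1).2.le⟩, h3⟩
  have hB1A2 : B1 ⊆ A2 := by
    rintro x ⟨h1, h3⟩
    exact ⟨hc₁sub h1, h3⟩
  have hA2B2 : A2 ⊆ B2 := by
    rintro x ⟨h1, h3⟩
    exact ⟨⟨(hD₂sub h1).1, (hD₂sub h1).2.le⟩, h3⟩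
  have hB1B2 : B1 ⊆ B2 := fun x hx => hA2B2 (hB1A2 hx)
  have hLB2 : {x | x ∈ B ∧ V x = c} ⊆ B2 := by
    rintro x ⟨h1, h2⟩
    refine ⟨⟨h1, h2.le⟩, fun h => ?_⟩
    rw [h, hVxs] at h2
    exact hc.ne h2
  -- ======== continuous crossing times on B2 ========
  have hB2mem : ∀ x : ↥B2, (x:M) ∈ B ∧ (x:M) ≠ x_star := fun x => ⟨x.2.1.1, x.2.2⟩
  have hcrossS : ∀ b : ℝ, 0 < b → ∃ θ : ↥B2 → ℝ,
      (∀ x : ↥B2, V (Φ (θ x) ↑x) = b) ∧ Continuous θ := by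
    intro b hb
    choose θ hθ using fun x : ↥B2 => hcross ↑x (hB2mem x).1 (hB2mem x).2 b hb
    refine ⟨θ, fun x => (hθ x).1, ?_⟩
    have hmaps : ∀ t : ℝ, Continuous fun x : ↥B2 => V (Φ t ↑x) := by
      intro t
      apply hVcont.comp_continuous
      · exact hΦcont.comp (continuous_const.prodMk continuous_subtype_val)
      · exact fun y => hBinv t ↑y (hB2mem y).1
    rw [continuous_iff_continuousAt]
    intro x₀
    apply tendsto_order.2
    constructor
    · intro l hl
      have hx₀ := hVstrict ↑x₀ (hB2mem x₀).1 (hB2mem x₀).2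
      set t₁ : ℝ := (l + θ x₀)/2 with ht₁def
      have hl1 : l < t₁ := by rw [ht₁def]; linarith
      have ht₁ : t₁ < θ x₀ := by rw [ht₁def]; linarith
      have hx₀mem : b < V (Φ t₁ ↑x₀) := by
        have h := hx₀ ht₁
        simp only at h
        rwa [(hθ x₀).1] at h
      have hopen : IsOpen {x : ↥B2 | b < V (Φ t₁ ↑x)} :=
        isOpen_lt continuous_const (hmaps t₁)
      refine Filter.eventually_of_mem (hopen.mem_nhds hx₀mem) ?_
      intro x hxmem
      have hx' := hVstrict ↑x (hB2mem x).1 (hB2mem x).2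
      have : t₁ < θ x := by
        have h2 := hx'.lt_iff_gt (a := θ x) (b := t₁)
        apply h2.mp
        show V (Φ (θ x) ↑x) < V (Φ t₁ ↑x)
        rw [(hθ x).1]
        exact hxmem
      linarith
    · intro u hu
      have hx₀ := hVstrict ↑x₀ (hB2mem x₀).1 (hB2mem x₀).2
      set t₂ : ℝ := (θ x₀ + u)/2 with ht₂def
      have hu1 : t₂ < u := by rw [ht₂def]; linarith
      have ht₂ : θ x₀ < t₂ := by rw [ht₂def]; linarith
      have hx₀mem : V (Φ t₂ ↑x₀) < b := by
        have h := hx₀ ht₂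
        simp only at h
        rwa [(hθ x₀).1] at h
      have hopen : IsOpen {x : ↥B2 | V (Φ t₂ ↑x) < b} :=
        isOpen_lt (hmaps t₂) continuous_const
      refine Filter.eventually_of_mem (hopen.mem_nhds hx₀mem) ?_
      intro x hxmem
      have hx' := hVstrict ↑x (hB2mem x).1 (hB2mem x).2
      have : θ x < t₂ := by
        have h2 := hx'.lt_iff_gt (a := t₂) (b := θ x)
        apply h2.mp
        show V (Φ t₂ ↑x) < V (Φ (θ x) ↑x)
        rw [(hθ x).1]
        exact hxmem
      linarith
  obtain ⟨θc, hθc, hθccont⟩ := hcrossS c hc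
  obtain ⟨θ₁, hθ₁, hθ₁cont⟩ := hcrossS c₁ hc₁pos
  have hθc0 : ∀ x : ↥B2, θc x ≤ 0 := by
    intro x
    by_contra hpos
    push_neg at hpos
    have hlt := (hVstrict ↑x (hB2mem x).1 (hB2mem x).2) hpos
    simp only at hlt
    rw [hθc x, hΦ0] at hlt
    exact absurd x.2.1.2 (not_le.mpr hlt)
  have hmemB2flow : ∀ (x : ↥B2) (t : ℝ), θc x ≤ t → t ≤ 0 → Φ t ↑x ∈ B2 := by
    intro x t h1 h2
    refine ⟨⟨hBinv t ↑x (hB2mem x).1, ?_⟩, hnever t ↑x (hB2mem x).2⟩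
    have h3 := (hVstrict ↑x (hB2mem x).1 (hB2mem x).2).antitone h1
    rwa [hθc x] at h3
  -- deformation retraction of B2 onto the level set L
  have hLretr : ∃ rL : C(↥B2, ↥{x : M | x ∈ B ∧ V x = c}),
      rL.comp (ContinuousMap.inclusion hLB2) = ContinuousMap.id _ ∧
      ((ContinuousMap.inclusion hLB2).comp rL).Homotopic (ContinuousMap.id _) := by
    have hmemL : ∀ x : ↥B2, Φ (θc x) ↑x ∈ {x : M | x ∈ B ∧ V x = c} :=
      fun x => ⟨hBinv _ _ (hB2mem x).1, hθc x⟩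
    refine ⟨⟨fun x => ⟨Φ (θc x) ↑x, hmemL x⟩, ?_⟩, ?_, ?_⟩
    · apply Continuous.subtype_mk
      exact hΦcont.comp (hθccont.prodMk continuous_subtype_val)
    · ext x
      have h0 : θc (ContinuousMap.inclusion hLB2 x) = 0 := by
        have h1 : V (Φ (0:ℝ) (↑x:M)) = c := by rw [hΦ0]; exact x.2.2
        exact (hVstrict (↑x:M) x.2.1 (hLB2 x.2).2).injective
          ((hθc (ContinuousMap.inclusion hLB2 x)).trans h1.symm)
      show Φ (θc (ContinuousMap.inclusion hLB2 x)) (↑x:M) = (↑x:M)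
      rw [h0, hΦ0]
    · have hmemH : ∀ p : unitInterval × ↥B2, Φ ((1 - (p.1:ℝ)) * θc p.2) ↑p.2 ∈ B2 := by
        rintro ⟨s, x⟩
        have h1' := s.2.1
        have h2' := s.2.2
        apply hmemB2flow
        · nlinarith [hθc0 x, mul_nonneg h1' (neg_nonneg.mpr (hθc0 x))]
        · nlinarith [mul_nonneg (by linarith : (0:ℝ) ≤ 1 - (s:ℝ))
            (neg_nonneg.mpr (hθc0 x))]
      refine ⟨{ toFun := fun p => ⟨Φ ((1 - (p.1:ℝ)) * θc p.2) ↑p.2, hmemH p⟩,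
                continuous_toFun := ?_, map_zero_left := ?_, map_one_left := ?_ }⟩
      · apply Continuous.subtype_mk
        exact hΦcont.comp (Continuous.prodMk
          ((continuous_const.sub (continuous_subtype_val.comp continuous_fst)).mul
            (hθccont.comp continuous_snd))
          (continuous_subtype_val.comp continuous_snd))
      · intro x
        apply Subtype.ext
        show Φ ((1 - ((0:unitInterval):ℝ)) * θc x) ↑x = Φ (θc x) ↑x
        norm_num
      · intro x
        apply Subtype.ext
        show Φ ((1 - ((1:unitInterval):ℝ)) * θc x) ↑x = ↑x
        norm_num [hΦ0]
  -- deformation retraction of B2 onto B1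
  have hmax_mem : ∀ x : ↥B2, Φ (max (θ₁ x) 0) ↑x ∈ B1 := by
    intro x
    have hV' : V (Φ (max (θ₁ x) 0) ↑x) ≤ c₁ := by
      rcases le_or_gt (θ₁ x) 0 with h | h
      · rw [max_eq_right h]
        have h3 := (hVstrict ↑x (hB2mem x).1 (hB2mem x).2).antitone h
        rwa [hθ₁ x] at h3
      · rw [max_eq_left h.le, hθ₁ x]
    exact ⟨⟨hBinv _ _ (hB2mem x).1, hV'⟩, hnever _ _ (hB2mem x).2⟩
  have hB1retr : ∃ rF : C(↥B2, ↥B1),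
      rF.comp (ContinuousMap.inclusion hB1B2) = ContinuousMap.id _ ∧
      ((ContinuousMap.inclusion hB1B2).comp rF).Homotopic (ContinuousMap.id _) := by
    refine ⟨⟨fun x => ⟨Φ (max (θ₁ x) 0) ↑x, hmax_mem x⟩, ?_⟩, ?_, ?_⟩
    · apply Continuous.subtype_mk
      exact hΦcont.comp ((hθ₁cont.max continuous_const).prodMk continuous_subtype_val)
    · ext x
      have hle : θ₁ (ContinuousMap.inclusion hB1B2 x) ≤ 0 := by
        set y : ↥B2 := ContinuousMap.inclusion hB1B2 x with hydef
        by_contra hpos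
        push_neg at hpos
        have hlt := (hVstrict (↑y:M) (hB2mem y).1 (hB2mem y).2) hpos
        simp only at hlt
        rw [hθ₁ y, hΦ0] at hlt
        have hVx : V (↑y:M) ≤ c₁ := x.2.1.2
        exact absurd hVx (not_le.mpr hlt)
      show Φ (max (θ₁ (ContinuousMap.inclusion hB1B2 x)) 0) (↑x:M) = (↑x:M)
      rw [max_eq_right hle, hΦ0]
    · have hmemH : ∀ p : unitInterval × ↥B2,
          Φ ((1 - (p.1:ℝ)) * max (θ₁ p.2) 0) ↑p.2 ∈ B2 := by
        rintro ⟨s, x⟩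
        have h1' := s.2.1
        have h2' := s.2.2
        have htime : 0 ≤ (1 - (s:ℝ)) * max (θ₁ x) 0 :=
          mul_nonneg (by linarith) (le_max_right _ _)
        refine ⟨⟨hBinv _ _ (hB2mem x).1, ?_⟩, hnever _ _ (hB2mem x).2⟩
        exact le_trans (hdec ↑x (hB2mem x).1 _ htime) x.2.1.2
      refine ⟨{ toFun := fun p => ⟨Φ ((1 - (p.1:ℝ)) * max (θ₁ p.2) 0) ↑p.2, hmemH p⟩,
                continuous_toFun := ?_, map_zero_left := ?_, map_one_left := ?_ }⟩
      · apply Continuous.subtype_mk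
        exact hΦcont.comp (Continuous.prodMk
          ((continuous_const.sub (continuous_subtype_val.comp continuous_fst)).mul
            (((hθ₁cont.max continuous_const)).comp continuous_snd))
          (continuous_subtype_val.comp continuous_snd))
      · intro x
        apply Subtype.ext
        show Φ ((1 - ((0:unitInterval):ℝ)) * max (θ₁ x) 0) ↑x = Φ (max (θ₁ x) 0) ↑x
        norm_num
      · intro x
        apply Subtype.ext
        show Φ ((1 - ((1:unitInterval):ℝ)) * max (θ₁ x) 0) ↑x = ↑x
        norm_num [hΦ0]
  -- ======== chart conjugation maps ========
  set CB1 : Set E := Metric.closedBall z₀ ε₁ \ {z₀} with hCB1def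
  set CB2 : Set E := Metric.closedBall z₀ ε₂ \ {z₀} with hCB2def
  have hCB12 : CB1 ⊆ CB2 :=
    diff_subset_diff_left (Metric.closedBall_subset_closedBall hε₁le)
  have hsphsub : (Metric.sphere z₀ ε₂ : Set E) ⊆ CB2 := by
    intro y hy
    refine ⟨Metric.sphere_subset_closedBall hy, ?_⟩
    simp only [mem_singleton_iff]
    intro h
    rw [h] at hy
    have h0 : (0:ℝ) = ε₂ := by simpa [Metric.mem_sphere] using hy
    linarith
  have hA2cb : ∀ x : M, x ∈ A2 → e x ∈ CB2 := by
    rintro x ⟨⟨h1, h2⟩, h3⟩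
    refine ⟨h2, ?_⟩
    simp only [mem_singleton_iff]
    intro h
    exact h3 (e.injOn h1 hxsrc (h.trans hz₀def))
  have hsymmA2 : ∀ y : E, y ∈ CB2 → e.symm y ∈ A2 := by
    intro y hy
    have hyt : y ∈ e.target := hε₂tgt hy.1
    refine ⟨⟨e.map_target hyt, by rw [e.right_inv hyt]; exact hy.1⟩, ?_⟩
    intro h
    apply hy.2
    have h2 : y = e (e.symm y) := (e.right_inv hyt).symm
    rw [mem_singleton_iff, h2, h]
  have hsymmA1 : ∀ y : E, y ∈ CB1 → e.symm y ∈ A1 := by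
    intro y hy
    have hyt : y ∈ e.target := hε₂tgt (hCB12 hy).1
    refine ⟨⟨e.map_target hyt, by rw [e.right_inv hyt]; exact hy.1⟩, ?_⟩
    intro h
    apply hy.2
    have h2 : y = e (e.symm y) := (e.right_inv hyt).symm
    rw [mem_singleton_iff, h2, h]
  have hiex : ∃ i : C(↥CB1, ↥B1), ∀ y : ↥CB1, ((i y) : M) = e.symm ↑y := by
    refine ⟨⟨fun y => ⟨e.symm ↑y, hA1B1 (hsymmA1 ↑y y.2)⟩, ?_⟩, fun y => rfl⟩
    apply Continuous.subtype_mk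
    exact e.continuousOn_symm.comp_continuous continuous_subtype_val
      (fun y => hε₂tgt (hCB12 y.2).1)
  have hjex : ∃ j : C(↥B1, ↥CB2), ∀ x : ↥B1, ((j x) : E) = e ↑x := by
    refine ⟨⟨fun x => ⟨e ↑x, hA2cb ↑x (hB1A2 x.2)⟩, ?_⟩, fun x => rfl⟩
    apply Continuous.subtype_mk
    exact e.continuousOn.comp_continuous continuous_subtype_val
      (fun x => (hB1A2 x.2).1.1)
  have hkex : ∃ k : C(↥CB2, ↥B2), ∀ y : ↥CB2, ((k y) : M) = e.symm ↑y := by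
    refine ⟨⟨fun y => ⟨e.symm ↑y, hA2B2 (hsymmA2 ↑y y.2)⟩, ?_⟩, fun y => rfl⟩
    apply Continuous.subtype_mk
    exact e.continuousOn_symm.comp_continuous continuous_subtype_val
      (fun y => hε₂tgt y.2.1)
  obtain ⟨i, hi⟩ := hiex
  obtain ⟨j, hj⟩ := hjex
  obtain ⟨k, hk⟩ := hkex
  obtain ⟨rE, hrE1, hrE2⟩ := lyap_aux_clamp z₀ hε₁pos hε₁le
  obtain ⟨rS, hrS1, hrS2⟩ := lyap_aux_sphere z₀ hε₂pos hsphsub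
  obtain ⟨rL, hrL1, hrL2⟩ := hLretr
  obtain ⟨rF, hrF1, hrF2⟩ := hB1retr
  have hji : j.comp i = ContinuousMap.inclusion hCB12 := by
    apply ContinuousMap.ext
    intro y
    apply Subtype.ext
    show ((j (i y)) : E) = (↑y : E)
    rw [hj (i y), hi y]
    exact e.right_inv (hε₂tgt (hCB12 y.2).1)
  have hkj : k.comp j = ContinuousMap.inclusion hB1B2 := by
    apply ContinuousMap.ext
    intro x
    apply Subtype.ext
    show ((k (j x)) : M) = (↑x : M)
    rw [hk (j x), hj x]
    exact e.left_inv (hB1A2 x.2).1.1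
  have hr1 : (rE.comp (j.comp i)).Homotopic (ContinuousMap.id _) := by
    rw [hji, hrE1]
  have hr2 : ((j.comp i).comp rE).Homotopic (ContinuousMap.id _) := by
    rw [hji]
    exact hrE2
  have hq1 : (rF.comp (k.comp j)).Homotopic (ContinuousMap.id _) := by
    rw [hkj, hrF1]
  have hq2 : ((k.comp j).comp rF).Homotopic (ContinuousMap.id _) := by
    rw [hkj]
    exact hrF2
  obtain ⟨EQmid⟩ := lyap_aux_sandwich i j k rE hr1 hr2 rF hq1 hq2
  have eqL : ContinuousMap.HomotopyEquiv ↥{x : M | x ∈ B ∧ V x = c} ↥B2 :=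
    ⟨ContinuousMap.inclusion hLB2, rL, by rw [hrL1], hrL2⟩
  have eqB : ContinuousMap.HomotopyEquiv ↥B2 ↥B1 :=
    ⟨rF, ContinuousMap.inclusion hB1B2, hrF2, by rw [hrF1]⟩
  have eqS : ContinuousMap.HomotopyEquiv ↥CB2 ↥(Metric.sphere z₀ ε₂ : Set E) :=
    ⟨rS, ContinuousMap.inclusion hsphsub, hrS2, by rw [hrS1]⟩
  exact ⟨eqL.trans (eqB.trans (EQmid.trans (eqS.trans
    (lyapAuxSphereHomeo z₀ hε₂pos).toHomotopyEquiv)))⟩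
end
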